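/- arXiv:2402.10081 — 8 statements merged into one kernel-verified Lean document; each statement's English description precedes it below -/
import Mathlib

section
/- Let x ≥ 3 and g ≥ 1 be integers and d_0, …, d_{x−1} ∈ Z_g, and let G[Δ] be the simple graph on vertex set Z_x × Z_g whose edges join (k, j) to (k+1, j+d_k) for every k ∈ Z_x and j ∈ Z_g. Let d ∈ {0, 1, …, g−1} be the representative of d_0 + d_1 + ⋯ + d_{x−1} modulo g, and let h = gcd(d, g). Then: (1) if d ≠ g/2, the graph G[Δ] has exactly h connected components, and each component is a cycle of length (g/h)·x; (2) if g is even and d = g/2, then G[Δ] has exactly g/2 connected components, and each component is a cycle of length 2x. -/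
theorem gDelta_components (x g : ℕ) (hx : 3 ≤ x) (hg : 1 ≤ g)
    (d : ZMod x → ZMod g) (G : SimpleGraph (ZMod x × ZMod g))
    (hG : G = SimpleGraph.fromEdgeSet
      {e : Sym2 (ZMod x × ZMod g) |
        ∃ (k : ZMod x) (j : ZMod g), e = s((k, j), (k + 1, j + d k))})
    (D : ℕ) (hD : D = (∑ k ∈ Finset.range x, d (k : ZMod x)).val)
    (h : ℕ) (hh : h = Nat.gcd D g) :
    (2 * D ≠ g →
      Nat.card G.ConnectedComponent = h ∧
      (∀ a : ZMod x × ZMod g, {b | G.Adj a b}.ncard = 2) ∧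
      (∀ a : ZMod x × ZMod g, {b | G.Reachable a b}.ncard = (g / h) * x)) ∧
    (Even g → 2 * D = g →
      Nat.card G.ConnectedComponent = g / 2 ∧
      (∀ a : ZMod x × ZMod g, {b | G.Adj a b}.ncard = 2) ∧
      (∀ a : ZMod x × ZMod g, {b | G.Reachable a b}.ncard = 2 * x)) := by
  haveI : NeZero x := ⟨by omega⟩
  haveI : NeZero g := ⟨by omega⟩
  have hhD : h ∣ D := hh ▸ Nat.gcd_dvd_left D g
  have hhg : h ∣ g := hh ▸ Nat.gcd_dvd_right D g
  haveI : NeZero h := ⟨by rw [hh]; exact Nat.gcd_ne_zero_right (by omega)⟩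
  -- the cast ring hom
  set ψ : ZMod g →+* ZMod h := ZMod.castHom hhg (ZMod h) with hψ
  -- total sum
  set Dbar : ZMod g := ∑ k ∈ Finset.range x, d (k : ZMod x) with hDbar
  have hDcast : (D : ZMod g) = Dbar := by
    rw [hD, ZMod.natCast_val, ZMod.cast_id]
  have hψD : ψ Dbar = 0 := by
    rw [← hDcast, map_natCast]
    exact (ZMod.natCast_eq_zero_iff D h).2 hhD
  -- partial sums
  set s : ZMod x → ZMod g := fun k => ∑ i ∈ Finset.range k.val, d (i : ZMod x) with hs
  have hs0 : s 0 = 0 := by simp [hs, ZMod.val_zero]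
  have hstep : ∀ k : ZMod x, ψ (s (k + 1)) = ψ (s k) + ψ (d k) := by
    intro k
    have hkv : ((k.val : ℕ) : ZMod x) = k := by rw [ZMod.natCast_val, ZMod.cast_id]
    have hk1 : k + 1 = ((k.val + 1 : ℕ) : ZMod x) := by push_cast [hkv]; ring
    have hkvlt : k.val < x := ZMod.val_lt k
    rcases Nat.lt_or_ge (k.val + 1) x with hlt | hge
    · have : (k + 1).val = k.val + 1 := by
        rw [hk1, ZMod.val_natCast, Nat.mod_eq_of_lt hlt]
      rw [hs]
      simp only [this, Finset.sum_range_succ, map_add, hkv]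
    · have hxe : k.val + 1 = x := by omega
      have : (k + 1).val = 0 := by
        rw [hk1, hxe, ZMod.val_natCast, Nat.mod_self]
      rw [hs]
      simp only [this, Finset.sum_range_zero, map_zero]
      have hsum2 : s k + d k = Dbar := by
        rw [hs, hDbar, show Finset.range x = Finset.range (k.val + 1) from by rw [hxe],
          Finset.sum_range_succ, hkv]
      rw [← map_add, hsum2, hψD]
  -- the invariant
  set φ : ZMod x × ZMod g → ZMod h := fun p => ψ p.2 - ψ (s p.1) with hφ
  -- adjacency characterization
  have hone : (1 : ZMod x) ≠ 0 := by
    haveI : Fact (1 < x) := ⟨by omega⟩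
    exact one_ne_zero
  have hAdj : ∀ p q : ZMod x × ZMod g, G.Adj p q ↔
      (q = (p.1 + 1, p.2 + d p.1) ∨ p = (q.1 + 1, q.2 + d q.1)) := by
    intro p q
    rw [hG, SimpleGraph.fromEdgeSet_adj]
    constructor
    · rintro ⟨⟨k, j, he⟩, hne⟩
      rw [Sym2.eq_iff] at he
      rcases he with ⟨h1, h2⟩ | ⟨h1, h2⟩
      · subst h1; subst h2; left; rfl
      · subst h1; subst h2; right; rfl
    · rintro (hq | hp)
      · refine ⟨⟨p.1, p.2, by rw [hq]⟩, ?_⟩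
        intro hpq
        rw [hq] at hpq
        have h5 : p.1 = p.1 + 1 := congrArg Prod.fst hpq
        simp only [left_eq_add] at h5
        exact hone h5
      · refine ⟨⟨q.1, q.2, by rw [hp]; rw [Sym2.eq_swap]⟩, ?_⟩
        intro hpq
        rw [hp] at hpq
        have h5 : q.1 + 1 = q.1 := congrArg Prod.fst hpq
        simp only [add_eq_left] at h5
        exact hone h5
  -- degree claim
  have hdeg : ∀ a : ZMod x × ZMod g, {b | G.Adj a b}.ncard = 2 := by
    rintro ⟨a1, a2⟩
    have hset : {b | G.Adj (a1, a2) b} = {(a1 + 1, a2 + d a1), (a1 - 1, a2 - d (a1 - 1))} := by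
      ext ⟨q1, q2⟩
      simp only [Set.mem_setOf_eq, hAdj, Set.mem_insert_iff, Set.mem_singleton_iff]
      constructor
      · rintro (hq | hp)
        · left; exact hq
        · right
          have e1 : a1 = q1 + 1 := congrArg Prod.fst hp
          have e2 : a2 = q2 + d q1 := congrArg Prod.snd hp
          have f1 : q1 = a1 - 1 := by rw [e1]; ring
          refine Prod.ext f1 ?_
          rw [← f1, e2]; ring
      · rintro (hq | hq)
        · left; exact hq
        · right
          have e1 : q1 = a1 - 1 := congrArg Prod.fst hq
          have e2 : q2 = a2 - d (a1 - 1) := congrArg Prod.snd hq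
          refine Prod.ext ?_ ?_
          · simp only []
            rw [e1]; ring
          · simp only []
            rw [e2, e1]; ring
    rw [hset, Set.ncard_pair]
    intro he
    have e1 : a1 + 1 = a1 - 1 := congrArg Prod.fst he
    have h2 : ((2 : ℕ) : ZMod x) = 0 := by
      push_cast
      have : a1 + 1 - (a1 - 1) = 0 := by rw [e1]; ring
      calc (2 : ZMod x) = a1 + 1 - (a1 - 1) := by ring
        _ = 0 := this
    have hdvd : x ∣ 2 := (ZMod.natCast_eq_zero_iff 2 x).1 h2
    have := Nat.le_of_dvd (by norm_num) hdvd
    omega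
  -- one-step reachability
  have hreach1 : ∀ (k : ZMod x) (j : ZMod g), G.Reachable (k, j) (k + 1, j + d k) :=
    fun k j => SimpleGraph.Adj.reachable ((hAdj _ _).2 (Or.inl rfl))
  -- walking forward n steps from (0, j)
  have hwalk : ∀ (j : ZMod g) (n : ℕ),
      G.Reachable (0, j) ((n : ZMod x), j + ∑ i ∈ Finset.range n, d (i : ZMod x)) := by
    intro j n
    induction n with
    | zero =>
      simp only [Nat.cast_zero, Finset.range_zero, Finset.sum_empty, add_zero]
      exact SimpleGraph.Reachable.refl _
    | succ n ih =>
      refine ih.trans ?_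
      have := hreach1 (n : ZMod x) (j + ∑ i ∈ Finset.range n, d (i : ZMod x))
      have he : ((n + 1 : ℕ) : ZMod x) = (n : ZMod x) + 1 := by push_cast; ring
      rw [he, Finset.sum_range_succ, ← add_assoc]
      exact this
  -- going around once
  have honce : ∀ j : ZMod g, G.Reachable (0, j) (0, j + Dbar) := by
    intro j
    have := hwalk j x
    rwa [ZMod.natCast_self, ← hDbar] at this
  -- going around m times
  have hmany : ∀ (j : ZMod g) (m : ℕ), G.Reachable (0, j) (0, j + (m : ZMod g) * Dbar) := by
    intro j m
    induction m with
    | zero =>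
      simp only [Nat.cast_zero, zero_mul, add_zero]
      exact SimpleGraph.Reachable.refl _
    | succ m ih =>
      refine ih.trans ?_
      have := honce (j + (m : ZMod g) * Dbar)
      have he : j + ((m + 1 : ℕ) : ZMod g) * Dbar = j + (m : ZMod g) * Dbar + Dbar := by
        push_cast; ring
      rwa [he]
  -- every vertex reaches its canonical column-0 representative
  have hback : ∀ p : ZMod x × ZMod g, G.Reachable (0, p.2 - s p.1) p := by
    rintro ⟨k, c⟩
    have := hwalk (c - s k) k.val
    have hkv : ((k.val : ℕ) : ZMod x) = k := by rw [ZMod.natCast_val, ZMod.cast_id]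
    rw [hkv] at this
    have he : c - s k + ∑ i ∈ Finset.range k.val, d (i : ZMod x) = c := by
      rw [hs]; ring
    rwa [he] at this
  -- kernel of ψ consists of multiples of Dbar
  have hker : ∀ u : ZMod g, ψ u = 0 → ∃ v : ZMod g, u = v * Dbar := by
    intro u hu
    have hval : ψ u = ((u.val : ℕ) : ZMod h) := by
      conv_lhs => rw [show u = ((u.val : ℕ) : ZMod g) from by rw [ZMod.natCast_val, ZMod.cast_id]]
      rw [map_natCast]
    rw [hval] at hu
    have hdvd : h ∣ u.val := (ZMod.natCast_eq_zero_iff u.val h).1 hu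
    obtain ⟨t, ht⟩ := hdvd
    have hbez := Nat.gcd_eq_gcd_ab D g
    rw [← hh] at hbez
    -- cast Bezout identity into ZMod g
    have hcast : ((h : ℕ) : ZMod g) = Dbar * ((Nat.gcdA D g : ℤ) : ZMod g) := by
      have : (((h : ℤ) : ℤ) : ZMod g) = (((D * Nat.gcdA D g + g * Nat.gcdB D g : ℤ)) : ZMod g) := by
        exact_mod_cast congrArg (fun z : ℤ => (z : ZMod g)) hbez
      push_cast at this
      rw [ZMod.natCast_self] at this
      simpa [hDcast] using this
    refine ⟨((t : ℕ) : ZMod g) * ((Nat.gcdA D g : ℤ) : ZMod g), ?_⟩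
    have hu' : u = ((u.val : ℕ) : ZMod g) := by rw [ZMod.natCast_val, ZMod.cast_id]
    rw [hu', ht]
    push_cast
    rw [hcast]
    ring
  -- φ is invariant along edges
  have hinv : ∀ p q : ZMod x × ZMod g, G.Adj p q → φ p = φ q := by
    intro p q hpq
    rw [hAdj] at hpq
    rcases hpq with hq | hp
    · rw [hφ, hq]
      simp only [map_add, hstep]
      ring
    · rw [hφ, hp]
      simp only [map_add, hstep]
      ring
  have hinvR : ∀ p q : ZMod x × ZMod g, G.Reachable p q → φ p = φ q := by
    intro p q hr
    obtain ⟨w⟩ := hr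
    induction w with
    | nil => rfl
    | cons ha _ ih => exact (hinv _ _ ha).trans ih
  -- full characterization of reachability
  have hreachIff : ∀ p q : ZMod x × ZMod g, G.Reachable p q ↔ φ p = φ q := by
    intro p q
    refine ⟨hinvR p q, ?_⟩
    intro he
    have h0 : ψ ((q.2 - s q.1) - (p.2 - s p.1)) = 0 := by
      simp only [map_sub]
      rw [hφ] at he
      simp only at he
      linear_combination -he
    obtain ⟨v, hv⟩ := hker _ h0
    have hvv : ((v.val : ℕ) : ZMod g) = v := by rw [ZMod.natCast_val, ZMod.cast_id]
    have hmid : G.Reachable (0, p.2 - s p.1) (0, q.2 - s q.1) := by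
      have := hmany (p.2 - s p.1) v.val
      rw [hvv] at this
      have he2 : p.2 - s p.1 + v * Dbar = q.2 - s q.1 := by rw [← hv]; ring
      rwa [he2] at this
    exact ((hback p).symm.trans hmid).trans (hback q)
  -- cardinality of the kernel
  have hK : Nat.card {u : ZMod g // ψ u = 0} = g / h := by
    have e : ZMod g ≃ ZMod h × {u : ZMod g // ψ u = 0} :=
      { toFun := fun u => ⟨ψ u, ⟨u - (((ψ u).val : ℕ) : ZMod g), by
          simp only [map_sub, map_natCast]
          rw [ZMod.natCast_val, ZMod.cast_id, sub_self]⟩⟩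
        invFun := fun cu => ((cu.1.val : ℕ) : ZMod g) + cu.2.1
        left_inv := fun u => by simp
        right_inv := fun ⟨c, ⟨k, hk⟩⟩ => by
          have h1 : ψ (((c.val : ℕ) : ZMod g) + k) = c := by
            rw [map_add, hk, map_natCast, add_zero, ZMod.natCast_val, ZMod.cast_id]
          refine Prod.ext ?_ ?_
          · exact h1
          · refine Subtype.ext ?_
            simp only [h1]
            ring }
    have hcard := Nat.card_congr e
    rw [Nat.card_zmod, Nat.card_prod, Nat.card_zmod] at hcard
    have hpos : 0 < h := Nat.pos_of_ne_zero (NeZero.ne h)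
    refine (Nat.div_eq_of_eq_mul_left hpos ?_).symm
    rw [mul_comm]
    exact hcard
  -- cardinality of each fiber of φ
  have hfiber : ∀ c : ZMod h, Nat.card {p : ZMod x × ZMod g // φ p = c} = x * (g / h) := by
    intro c
    have e : {p : ZMod x × ZMod g // φ p = c} ≃ ZMod x × {u : ZMod g // ψ u = 0} :=
      { toFun := fun ⟨⟨k, b⟩, hb⟩ => ⟨k, ⟨b - ((c.val : ℕ) : ZMod g) - s k, by
          simp only [map_sub, map_natCast]
          rw [ZMod.natCast_val, ZMod.cast_id]
          rw [hφ] at hb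
          simp only at hb
          linear_combination hb⟩⟩
        invFun := fun ⟨k, ⟨u, hu⟩⟩ => ⟨⟨k, u + ((c.val : ℕ) : ZMod g) + s k⟩, by
          rw [hφ]
          simp only [map_add, hu, map_natCast]
          rw [ZMod.natCast_val, ZMod.cast_id]
          ring⟩
        left_inv := fun ⟨⟨k, b⟩, hb⟩ => by
          refine Subtype.ext ?_
          simp only
          refine Prod.ext rfl ?_
          simp only
          ring
        right_inv := fun ⟨k, ⟨u, hu⟩⟩ => by
          refine Prod.ext rfl ?_
          refine Subtype.ext ?_
          simp only
          ring }
    rw [Nat.card_congr e, Nat.card_prod, Nat.card_zmod, hK]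
  -- size of each reachability class
  have hreachcard : ∀ a : ZMod x × ZMod g, {b | G.Reachable a b}.ncard = (g / h) * x := by
    intro a
    have hset : {b | G.Reachable a b} = {b | φ b = φ a} := by
      ext b
      simp only [Set.mem_setOf_eq]
      rw [hreachIff]
      exact ⟨fun hx' => hx'.symm, fun hx' => hx'.symm⟩
    rw [hset, ← Nat.card_coe_set_eq]
    have : Nat.card {b | φ b = φ a} = Nat.card {p : ZMod x × ZMod g // φ p = φ a} := rfl
    rw [this, hfiber, mul_comm]
  -- number of connected components
  have hcomp : Nat.card G.ConnectedComponent = h := by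
    let Φ : G.ConnectedComponent → ZMod h :=
      SimpleGraph.ConnectedComponent.lift φ (fun v w p _ => hinvR v w ⟨p⟩)
    have hbij : Function.Bijective Φ := by
      constructor
      · refine SimpleGraph.ConnectedComponent.ind₂ ?_
        intro v w hvw
        have : φ v = φ w := hvw
        rw [SimpleGraph.ConnectedComponent.eq]
        exact (hreachIff v w).2 this
      · intro c
        refine ⟨G.connectedComponentMk (0, ((c.val : ℕ) : ZMod g)), ?_⟩
        show φ (0, ((c.val : ℕ) : ZMod g)) = c
        rw [hφ]
        simp only [hs0, map_zero, map_natCast, sub_zero]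
        rw [ZMod.natCast_val, ZMod.cast_id]
    rw [Nat.card_congr (Equiv.ofBijective Φ hbij), Nat.card_zmod]
  -- conclude
  constructor
  · intro _
    exact ⟨hcomp, hdeg, hreachcard⟩
  · intro _ h2D
    have hDpos : 0 < D := by omega
    have hhD2 : h = D := by
      rw [hh]
      refine Nat.dvd_antisymm (Nat.gcd_dvd_left D g) (Nat.dvd_gcd dvd_rfl ⟨2, by omega⟩)
    have hg2 : g / 2 = D := by omega
    have hgh : g / h = 2 := by
      rw [hhD2, show g = 2 * D from h2D.symm]
      exact Nat.mul_div_cancel 2 hDpos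
    refine ⟨by rw [hcomp, hhD2, hg2], hdeg, ?_⟩
    intro a
    rw [hreachcard a, hgh]
end

section
/- Let x ≥ 4 be an even integer and let d_0, …, d_{x−1} ∈ Z_6 be such that d_0 + d_1 + ⋯ + d_{x−1} ∈ {0, 2, 4} in Z_6. Let G be the simple graph on vertex set Z_x × Z_6 whose edge set consists of the cross edges {(k, j), (k+1, j+d_k)} for all k ∈ Z_x and j ∈ Z_6, together with, for each k ∈ Z_x, the six inside edges {(k,0),(k,1)}, {(k,1),(k,2)}, {(k,2),(k,3)}, {(k,3),(k,4)}, {(k,4),(k,5)}, {(k,5),(k,0)}. Then the edge set of G can be partitioned into two C_{2x}-factors. -/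
/-- `E` is a `C_m`-factor: in the graph with edge set `E`, every vertex has exactly
two neighbours and every connected component has exactly `m` vertices, i.e. the
graph is a spanning 2-regular graph all of whose components are cycles of length `m`. -/
def IsCycleFactor {V : Type*} (E : Set (Sym2 V)) (m : ℕ) : Prop :=
  (∀ a : V, {b | (SimpleGraph.fromEdgeSet E).Adj a b}.ncard = 2) ∧
  (∀ a : V, {b | (SimpleGraph.fromEdgeSet E).Reachable a b}.ncard = m)

/-!
Each factor is the graph of a map `F_a` (`a ∈ ZMod 2`) all of whose orbits have length `2x`.
Since `∑ d` and `x` are even, there is `p : ZMod x → ZMod 2` with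
`p (k + 1) = p k + parity (d k) + 1`; call `(k, j)` outgoing for `a` when `parity j - p k = a`.
`F_a` sends an outgoing vertex along its cross edge and moves any other vertex one inside step,
of sign `±1`, to an outgoing vertex of the same column. Hence `parity j - p k` increases by one at
every step, `F_a ∘ F_a` advances the column by one, and the orbit length is a multiple of `2x`.
After `x` double steps the row has moved by `∑ (d k + τ k)`, where `τ k = ±1` is the sign of the
inside step after column `k`; as `∑ d ∈ {0, 2, 4}` and `x ≥ 2` is even, the signs can be chosen to
make this sum vanish in `ZMod 6`. Every vertex is outgoing for exactly one of `F_0`, `F_1`, which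
makes the two edge sets a partition of the edges.
-/

open Function Finset SimpleGraph

section FunctionalGraph

variable {V : Type*} {f : V → V}

variable (f) in
def edgesOfMap : Set (Sym2 V) := Set.range fun v => s(v, f v)

theorem fromEdgeSet_edgesOfMap_adj {a b : V} :
    (fromEdgeSet (edgesOfMap f)).Adj a b ↔ (f a = b ∨ f b = a) ∧ a ≠ b := by
  simp only [fromEdgeSet_adj, edgesOfMap, Set.mem_range, Sym2.eq_iff]
  constructor
  · rintro ⟨⟨v, ⟨rfl, rfl⟩ | ⟨rfl, rfl⟩⟩, hab⟩
    exacts [⟨Or.inl rfl, hab⟩, ⟨Or.inr rfl, hab⟩]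
  · rintro ⟨rfl | rfl, hab⟩
    exacts [⟨⟨a, Or.inl ⟨rfl, rfl⟩⟩, hab⟩, ⟨⟨b, Or.inr ⟨rfl, rfl⟩⟩, hab⟩]

theorem map_iterate_eq_add_of_map_eq_add_one {n : ℕ} (h : V → ZMod n)
    (hh : ∀ v, h (f v) = h v + 1) (v : V) (i : ℕ) : h (f^[i] v) = h v + i := by
  induction i with
  | zero => simp
  | succ i ih => rw [iterate_succ_apply', hh, ih]; push_cast; ring

theorem dvd_minimalPeriod_of_map_eq_add_one {n : ℕ} (h : V → ZMod n)
    (hh : ∀ v, h (f v) = h v + 1) (v : V) : n ∣ minimalPeriod f v := by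
  have := map_iterate_eq_add_of_map_eq_add_one h hh v (minimalPeriod f v)
  rwa [iterate_minimalPeriod, left_eq_add, ZMod.natCast_eq_zero_iff] at this

variable {n : ℕ} (hf : ∀ v, minimalPeriod f v = n)
include hf

theorem iterate_eq_self_iff_dvd {v : V} {i : ℕ} : f^[i] v = v ↔ n ∣ i := by
  rw [← hf v, ← isPeriodicPt_iff_minimalPeriod_dvd]; rfl

theorem iterate_ne_self {v : V} {i : ℕ} (hi : 0 < i) (hin : i < n) : f^[i] v ≠ v := fun h =>
  (Nat.le_of_dvd hi ((iterate_eq_self_iff_dvd hf).1 h)).not_gt hin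

theorem apply_eq_iff_eq_iterate_pred (hn : 0 < n) {a b : V} : f b = a ↔ b = f^[n - 1] a := by
  constructor
  · rintro rfl
    rw [← iterate_succ_apply, Nat.succ_eq_add_one, Nat.sub_add_cancel hn,
      (iterate_eq_self_iff_dvd hf).2 dvd_rfl]
  · rintro rfl
    rw [← iterate_succ_apply' f, Nat.succ_eq_add_one, Nat.sub_add_cancel hn,
      (iterate_eq_self_iff_dvd hf).2 dvd_rfl]

theorem reachable_fromEdgeSet_edgesOfMap_iff (hn : 0 < n) {a b : V} :
    (fromEdgeSet (edgesOfMap f)).Reachable a b ↔ ∃ i, f^[i] a = b := by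
  constructor
  · rw [reachable_iff_reflTransGen]
    intro hab
    induction hab with
    | refl => exact ⟨0, rfl⟩
    | tail _ hbc ih =>
      obtain ⟨i, rfl⟩ := ih
      rcases (fromEdgeSet_edgesOfMap_adj.1 hbc).1 with rfl | hc
      · exact ⟨i + 1, iterate_succ_apply' f i a⟩
      · rw [apply_eq_iff_eq_iterate_pred hf hn] at hc
        exact ⟨n - 1 + i, by rw [iterate_add_apply, hc]⟩
  · rintro ⟨i, rfl⟩
    induction i with
    | zero => rfl
    | succ i ih =>
      refine ih.trans ?_
      rw [iterate_succ_apply']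
      by_cases hfix : f^[i] a = f (f^[i] a)
      · rw [← hfix]
      · exact Adj.reachable (fromEdgeSet_edgesOfMap_adj.2 ⟨Or.inl rfl, hfix⟩)

theorem isCycleFactor_edgesOfMap (hn : 3 ≤ n) : IsCycleFactor (edgesOfMap f) n := by
  have hpos : 0 < n := by omega
  refine ⟨fun a => ?_, fun a => ?_⟩
  · have hnbrs : {b | (fromEdgeSet (edgesOfMap f)).Adj a b} = {f a, f^[n - 1] a} := by
      ext b
      change (fromEdgeSet _).Adj a b ↔ b = f a ∨ b = f^[n - 1] a
      rw [fromEdgeSet_edgesOfMap_adj, apply_eq_iff_eq_iterate_pred hf hpos (a := a) (b := b)]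
      constructor
      · rintro ⟨h | h, -⟩
        exacts [Or.inl h.symm, Or.inr h]
      · rintro (rfl | rfl)
        · exact ⟨Or.inl rfl, fun h => iterate_ne_self hf (i := 1) one_pos (by omega) h.symm⟩
        · exact ⟨Or.inr rfl, fun h => iterate_ne_self hf (i := n - 1) (by omega) (by omega) h.symm⟩
    rw [hnbrs, Set.ncard_pair]
    intro h
    apply iterate_ne_self hf (v := a) (i := 2) two_pos (by omega)
    rw [iterate_succ_apply', iterate_one, h, ← iterate_succ_apply' f, Nat.succ_eq_add_one,
      Nat.sub_add_cancel hpos, (iterate_eq_self_iff_dvd hf).2 dvd_rfl]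
  · have horbit : {b | (fromEdgeSet (edgesOfMap f)).Reachable a b} = (f^[·] a) '' Set.Iio n := by
      ext b
      change (fromEdgeSet _).Reachable a b ↔ _
      rw [reachable_fromEdgeSet_edgesOfMap_iff hf hpos, ← hf a]
      constructor
      · rintro ⟨i, rfl⟩
        exact ⟨i % minimalPeriod f a, Nat.mod_lt _ (hf a ▸ hpos), iterate_mod_minimalPeriod_eq⟩
      · rintro ⟨i, -, rfl⟩
        exact ⟨i, rfl⟩
    have hinj : Set.InjOn (f^[·] a) (Set.Iio n) := hf a ▸ iterate_injOn_Iio_minimalPeriod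
    rw [horbit, hinj.ncard_image, Set.ncard_Iio_nat]

theorem disjoint_edgesOfMap_diagSet (hn : 2 ≤ n) : Disjoint (edgesOfMap f) Sym2.diagSet := by
  rw [Set.disjoint_left]
  rintro _ ⟨v, rfl⟩ hdiag
  exact iterate_ne_self hf (v := v) (i := 1) one_pos hn (Sym2.mk_isDiag_iff.1 hdiag).symm

end FunctionalGraph

theorem ZMod.exists_add_one_eq_add {n : ℕ} [NeZero n] {M : Type*} [AddCommMonoid M]
    (g : ZMod n → M) (hg : ∑ i ∈ range n, g i = 0) :
    ∃ p : ZMod n → M, ∀ k, p (k + 1) = p k + g k := by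
  refine ⟨fun k => ∑ i ∈ range k.val, g i, fun k => ?_⟩
  have hk : k = (k.val : ZMod n) := (ZMod.natCast_zmod_val k).symm
  rcases (Nat.succ_le_of_lt (ZMod.val_lt k)).lt_or_eq with hlt | heq
  · have : (k + 1).val = k.val + 1 := by
      rw [hk, ← Nat.cast_succ, ZMod.val_natCast_of_lt hlt, ZMod.val_natCast_of_lt (by omega)]
    simp only [this, sum_range_succ, ← hk]
  · have : k + 1 = 0 := by rw [hk, ← Nat.cast_succ, heq, ZMod.natCast_self]
    simp only [this, ZMod.val_zero, range_zero, sum_empty]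
    rw [← hg, ← congrArg range heq, sum_range_succ, ← hk]

theorem sum_range_ite_lt_neg_one_one {R : Type*} [CommRing R] {t x : ℕ} (ht : t ≤ x) :
    ∑ i ∈ range x, (if i < t then (-1 : R) else 1) = x - 2 * t := by
  induction x, ht using Nat.le_induction with
  | base =>
    rw [sum_congr rfl fun i hi => if_pos (mem_range.1 hi), sum_const, card_range, nsmul_eq_mul]
    ring
  | succ x htx ih =>
    rw [sum_range_succ, ih, if_neg (by omega)]
    push_cast; ring

abbrev parity : ZMod 6 →+* ZMod 2 := ZMod.castHom (by norm_num) (ZMod 2)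

theorem ZMod.eq_zero_or_eq_one (a : ZMod 2) : a = 0 ∨ a = 1 := by
  revert a; decide

theorem ZMod.add_one_eq_iff_ne {a b : ZMod 2} : a + 1 = b ↔ a ≠ b := by
  revert a b; decide

theorem parity_eq_one_of_eq_one_or_eq_neg_one {s : ZMod 6} (hs : s = 1 ∨ s = -1) : parity s = 1 := by
  rcases hs with rfl | rfl <;> decide

theorem exists_sign_sum_eq {x : ℕ} (hev : Even x) (hx : 2 ≤ x) {s : ZMod 6} (hs : parity s = 0) :
    ∃ τ : ZMod x → ZMod 6, (∀ k, τ k = 1 ∨ τ k = -1) ∧ ∑ i ∈ range x, τ i = s := by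
  obtain ⟨y, rfl⟩ := hev
  obtain ⟨t, ht, hst⟩ :=
    (by decide : ∀ s u : ZMod 6, parity s = 0 → ∃ t : ℕ, t < 3 ∧ s = 2 * u - 2 * t) s y hs
  refine ⟨fun k => if k.val < t then -1 else 1, fun k => by dsimp only; split_ifs <;> simp, ?_⟩
  dsimp only
  rw [sum_congr rfl fun i hi => by rw [ZMod.val_natCast_of_lt (mem_range.1 hi)],
    sum_range_ite_lt_neg_one_one (by omega), hst]
  push_cast; ring

section Construction

variable {x : ℕ} (d : ZMod x → ZMod 6) (p : ZMod x → ZMod 2) (τ : ZMod x → ZMod 6)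

def phase (v : ZMod x × ZMod 6) : ZMod 2 := parity v.2 - p v.1

/-- The inside step at column `k` follows a cross edge out of column `k - 1`, hence its sign
`τ (k - 1)`. -/
def factorSucc (a : ZMod 2) (v : ZMod x × ZMod 6) : ZMod x × ZMod 6 :=
  if phase p v = a then (v.1 + 1, v.2 + d v.1) else (v.1, v.2 + τ (v.1 - 1))

variable {d p τ} {a : ZMod 2} {v : ZMod x × ZMod 6}

theorem factorSucc_of_phase_eq (h : phase p v = a) :
    factorSucc d p τ a v = (v.1 + 1, v.2 + d v.1) := if_pos h

theorem factorSucc_of_phase_ne (h : phase p v ≠ a) :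
    factorSucc d p τ a v = (v.1, v.2 + τ (v.1 - 1)) := if_neg h

theorem fst_factorSucc :
    (factorSucc d p τ a v).1 = if phase p v = a then v.1 + 1 else v.1 := by
  unfold factorSucc; split_ifs <;> rfl

variable (x) in
def insideEdges : Set (Sym2 (ZMod x × ZMod 6)) := {e | ∃ k j, e = s((k, j), (k, j + 1))}

variable (d) in
def crossEdges : Set (Sym2 (ZMod x × ZMod 6)) := {e | ∃ k j, e = s((k, j), (k + 1, j + d k))}

section
variable (hτ : ∀ k, τ k = 1 ∨ τ k = -1)
include hτ

theorem edgesOfMap_factorSucc_subset :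
    edgesOfMap (factorSucc d p τ a) ⊆ crossEdges d ∪ insideEdges x := by
  rintro _ ⟨v, rfl⟩
  beta_reduce
  by_cases h : phase p v = a
  · exact Or.inl ⟨v.1, v.2, by rw [factorSucc_of_phase_eq h]⟩
  · rw [factorSucc_of_phase_ne h]
    rcases hτ (v.1 - 1) with h1 | h1 <;> rw [h1]
    · exact Or.inr ⟨v.1, v.2, rfl⟩
    · exact Or.inr ⟨v.1, v.2 - 1, by rw [Sym2.eq_swap, sub_add_cancel, sub_eq_add_neg]⟩

theorem exists_factorSucc_eq_of_mem {e : Sym2 (ZMod x × ZMod 6)}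
    (he : e ∈ crossEdges d ∪ insideEdges x) : ∃ a v, s(v, factorSucc d p τ a v) = e := by
  rcases he with ⟨k, j, rfl⟩ | ⟨k, j, rfl⟩
  · exact ⟨phase p (k, j), (k, j), by rw [factorSucc_of_phase_eq rfl]⟩
  rcases hτ (k - 1) with h1 | h1
  · refine ⟨phase p (k, j) + 1, (k, j), ?_⟩
    rw [factorSucc_of_phase_ne (by simp), h1]
  · refine ⟨phase p (k, j + 1) + 1, (k, j + 1), ?_⟩
    rw [factorSucc_of_phase_ne (by simp), h1, Sym2.eq_swap, add_neg_cancel_right]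

end

variable (hp : ∀ k, p (k + 1) = p k + (parity (d k) + 1)) (hτ : ∀ k, τ k = 1 ∨ τ k = -1)
include hp hτ

theorem phase_factorSucc (a : ZMod 2) (v : ZMod x × ZMod 6) :
    phase p (factorSucc d p τ a v) = phase p v + 1 := by
  have h2 : (2 : ZMod 2) = 0 := rfl
  by_cases h : phase p v = a
  · rw [factorSucc_of_phase_eq h, phase, phase, map_add, hp]
    linear_combination -h2
  · rw [factorSucc_of_phase_ne h, phase, phase, map_add,
      parity_eq_one_of_eq_one_or_eq_neg_one (hτ _)]
    ring

theorem phase_factorSucc_eq_iff : phase p (factorSucc d p τ a v) = a ↔ phase p v ≠ a := by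
  rw [phase_factorSucc hp hτ, ZMod.add_one_eq_iff_ne]

theorem fst_factorSucc_factorSucc (a : ZMod 2) (v : ZMod x × ZMod 6) :
    (factorSucc d p τ a (factorSucc d p τ a v)).1 = v.1 + 1 := by
  by_cases h : phase p v = a
  · have h' : phase p (factorSucc d p τ a v) ≠ a := by
      rwa [ne_eq, phase_factorSucc_eq_iff hp hτ, not_not]
    rw [factorSucc_of_phase_ne h', factorSucc_of_phase_eq h]
  · rw [factorSucc_of_phase_eq ((phase_factorSucc_eq_iff hp hτ).2 h), factorSucc_of_phase_ne h]

theorem factorSucc_factorSucc_of_phase_eq (h : phase p v = a) :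
    factorSucc d p τ a (factorSucc d p τ a v) = (v.1 + 1, v.2 + (d v.1 + τ v.1)) := by
  have h' : phase p (factorSucc d p τ a v) ≠ a := by
    rwa [ne_eq, phase_factorSucc_eq_iff hp hτ, not_not]
  rw [factorSucc_of_phase_ne h', factorSucc_of_phase_eq h, add_sub_cancel_right, add_assoc]

theorem disjoint_edgesOfMap_factorSucc (hx : 3 ≤ x) :
    Disjoint (edgesOfMap (factorSucc d p τ 0)) (edgesOfMap (factorSucc d p τ 1)) := by
  have hne : ∀ m : ℕ, 0 < m → m < x → (m : ZMod x) ≠ 0 := fun m hm hmx h =>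
    (Nat.le_of_dvd hm ((ZMod.natCast_eq_zero_iff m x).1 h)).not_gt hmx
  have h1 : (1 : ZMod x) ≠ 0 := by exact_mod_cast hne 1 one_pos (by omega)
  have h2 : (2 : ZMod x) ≠ 0 := by exact_mod_cast hne 2 two_pos (by omega)
  have hphase (w : ZMod x × ZMod 6) := ZMod.eq_zero_or_eq_one (phase p w)
  rw [Set.disjoint_left]
  rintro _ ⟨u, rfl⟩ ⟨v, hv⟩
  rcases Sym2.eq_iff.1 hv with ⟨rfl, hvu⟩ | ⟨rfl, hvu⟩
  · apply congrArg Prod.fst at hvu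
    rcases hphase v with hc | hc <;> simp [fst_factorSucc, hc, h1] at hvu
  · rcases hphase u with hc | hc
    · have hc' : phase p (factorSucc d p τ 0 u) = 1 := by rw [phase_factorSucc hp hτ, hc, zero_add]
      rw [factorSucc_of_phase_eq hc', factorSucc_of_phase_eq hc] at hvu
      apply congrArg Prod.fst at hvu
      exact h2 (by linear_combination hvu)
    · have hc' : phase p (factorSucc d p τ 0 u) ≠ 1 := by
        rw [phase_factorSucc hp hτ, hc]; decide
      have hc0 : phase p u ≠ 0 := by rw [hc]; decide
      rw [factorSucc_of_phase_ne hc', factorSucc_of_phase_ne hc0] at hvu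
      apply congrArg Prod.snd at hvu
      have hττ : τ (u.1 - 1) + τ (u.1 - 1) = 0 := by linear_combination hvu
      rcases hτ (u.1 - 1) with h | h <;> rw [h] at hττ <;> exact absurd hττ (by decide)

theorem iterate_factorSucc_two_mul_of_phase_eq {q : ZMod x → ZMod 6}
    (hq : ∀ k, q (k + 1) = q k + (d k + τ k)) (h : phase p v = a) (s : ℕ) :
    (factorSucc d p τ a)^[2 * s] v = (v.1 + s, v.2 + (q (v.1 + s) - q v.1)) := by
  induction s with
  | zero => simp
  | succ s ih =>
    have hphase : phase p ((factorSucc d p τ a)^[2 * s] v) = a := by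
      rw [map_iterate_eq_add_of_map_eq_add_one _ (phase_factorSucc hp hτ a) v, h, Nat.cast_mul,
        ZMod.natCast_self, zero_mul, add_zero]
    rw [Nat.mul_succ, add_comm, iterate_add_apply]
    change factorSucc d p τ a (factorSucc d p τ a _) = _
    rw [factorSucc_factorSucc_of_phase_eq hp hτ hphase, ih, Nat.cast_succ, ← add_assoc v.1, hq]
    ext <;> dsimp only; ring

theorem isPeriodicPt_factorSucc {q : ZMod x → ZMod 6} (hq : ∀ k, q (k + 1) = q k + (d k + τ k))
    (a : ZMod 2) (v : ZMod x × ZMod 6) : IsPeriodicPt (factorSucc d p τ a) (2 * x) v := by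
  have hout : ∀ w, phase p w = a → IsPeriodicPt (factorSucc d p τ a) (2 * x) w := fun w hw => by
    rw [IsPeriodicPt, IsFixedPt, iterate_factorSucc_two_mul_of_phase_eq hp hτ hq hw,
      ZMod.natCast_self, add_zero, sub_self, add_zero]
  by_cases h : phase p v = a
  · exact hout v h
  set u : ZMod x × ZMod 6 := (v.1 - 1, v.2 - d (v.1 - 1))
  have hu : phase p u = a := by
    have h1 := ZMod.add_one_eq_iff_ne.2 h
    have h2 := hp (v.1 - 1)
    rw [sub_add_cancel] at h2
    simp only [phase, u, map_sub] at h1 ⊢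
    linear_combination h1 + h2
  have hsucc : factorSucc d p τ a u = v := by
    rw [factorSucc_of_phase_eq hu]
    simp [u]
  exact hsucc ▸ (hout u hu).apply

theorem minimalPeriod_factorSucc {q : ZMod x → ZMod 6} (hq : ∀ k, q (k + 1) = q k + (d k + τ k))
    (a : ZMod 2) (v : ZMod x × ZMod 6) : minimalPeriod (factorSucc d p τ a) v = 2 * x := by
  set f := factorSucc d p τ a
  refine Nat.dvd_antisymm (isPeriodicPt_factorSucc hp hτ hq a v).minimalPeriod_dvd ?_
  obtain ⟨s, hs⟩ := dvd_minimalPeriod_of_map_eq_add_one (phase p) (phase_factorSucc hp hτ a) v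
  have hxs : x ∣ s := by
    refine (dvd_minimalPeriod_of_map_eq_add_one (f := f^[2]) Prod.fst
      (fst_factorSucc_factorSucc hp hτ a) v).trans (IsPeriodicPt.minimalPeriod_dvd ?_)
    rw [IsPeriodicPt, IsFixedPt, ← iterate_mul, ← hs, iterate_minimalPeriod]
  rw [hs]
  exact Nat.mul_dvd_mul_left 2 hxs

theorem edgesOfMap_factorSucc_union {q : ZMod x → ZMod 6}
    (hq : ∀ k, q (k + 1) = q k + (d k + τ k)) (hx : 2 ≤ x) :
    edgesOfMap (factorSucc d p τ 0) ∪ edgesOfMap (factorSucc d p τ 1) =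
      (crossEdges d ∪ insideEdges x) \ Sym2.diagSet := by
  have hdiag (a : ZMod 2) : Disjoint (edgesOfMap (factorSucc d p τ a)) Sym2.diagSet :=
    disjoint_edgesOfMap_diagSet (minimalPeriod_factorSucc hp hτ hq a) (by omega)
  refine subset_antisymm (Set.union_subset ?_ ?_) ?_
  · exact Set.subset_sdiff.2 ⟨edgesOfMap_factorSucc_subset hτ, hdiag 0⟩
  · exact Set.subset_sdiff.2 ⟨edgesOfMap_factorSucc_subset hτ, hdiag 1⟩
  rintro _ ⟨he, -⟩
  obtain ⟨a, v, rfl⟩ := exists_factorSucc_eq_of_mem (p := p) hτ he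
  obtain rfl | rfl := ZMod.eq_zero_or_eq_one a
  exacts [Or.inl ⟨v, rfl⟩, Or.inr ⟨v, rfl⟩]

end Construction

theorem gDelta_plus_two_inside_factors (x : ℕ) (hx : 4 ≤ x) (hev : Even x)
    (d : ZMod x → ZMod 6)
    (hsum : (∑ k ∈ Finset.range x, d (k : ZMod x)) ∈ ({0, 2, 4} : Set (ZMod 6)))
    (G : SimpleGraph (ZMod x × ZMod 6))
    (hG : G = SimpleGraph.fromEdgeSet
      ({e : Sym2 (ZMod x × ZMod 6) |
          ∃ (k : ZMod x) (j : ZMod 6), e = s((k, j), (k + 1, j + d k))} ∪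
       {e : Sym2 (ZMod x × ZMod 6) |
          ∃ (k : ZMod x) (j : ZMod 6), e = s((k, j), (k, j + 1))})) :
    ∃ E₁ E₂ : Set (Sym2 (ZMod x × ZMod 6)),
      Disjoint E₁ E₂ ∧ E₁ ∪ E₂ = G.edgeSet ∧
      IsCycleFactor E₁ (2 * x) ∧ IsCycleFactor E₂ (2 * x) := by
  have : NeZero x := ⟨by omega⟩
  have hpar : parity (∑ k ∈ range x, d k) = 0 := by
    simp only [Set.mem_insert_iff, Set.mem_singleton_iff] at hsum
    rcases hsum with h | h | h <;> rw [h] <;> decide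
  obtain ⟨τ, hτ, hτsum⟩ := exists_sign_sum_eq hev (by omega) (s := -∑ k ∈ range x, d k)
    (by rw [map_neg, hpar, neg_zero])
  obtain ⟨p, hp⟩ := ZMod.exists_add_one_eq_add (fun k => parity (d k) + 1) (by
    rw [sum_add_distrib, ← map_sum, hpar, sum_const, card_range, nsmul_one,
      ZMod.natCast_eq_zero_iff_even.2 hev, add_zero])
  obtain ⟨q, hq⟩ := ZMod.exists_add_one_eq_add (fun k => d k + τ k) (by
    rw [sum_add_distrib, hτsum, add_neg_cancel])
  have hcycle (a : ZMod 2) : IsCycleFactor (edgesOfMap (factorSucc d p τ a)) (2 * x) :=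
    isCycleFactor_edgesOfMap (minimalPeriod_factorSucc hp hτ hq a) (by omega)
  refine ⟨_, _, disjoint_edgesOfMap_factorSucc hp hτ (by omega), ?_, hcycle 0, hcycle 1⟩
  rw [hG, SimpleGraph.edgeSet_fromEdgeSet]
  exact edgesOfMap_factorSucc_union hp hτ hq (by omega)
end

section
/- Let x ≥ 4 be an even integer. Let G be the simple graph on vertex set Z_x × Z_6 whose edge set consists of the edges {(k, j), (k+1, j)} for all k ∈ Z_x and j ∈ Z_6, together with, for each k ∈ Z_x, the three inside edges {(k,0),(k,2)}, {(k,1),(k,4)}, {(k,3),(k,5)}. Then the edge set of G can be partitioned into one C_{2x}-factor and one perfect matching of G. -/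
/-- `E` is a perfect matching: every vertex lies on exactly one edge of `E`. -/
def IsPerfectMatchingSet {V : Type*} (E : Set (Sym2 V)) : Prop :=
  ∀ a : V, {b | (SimpleGraph.fromEdgeSet E).Adj a b}.ncard = 1

/-!
The inside edges pair the rows as `{0,2}, {1,4}, {3,5}`, so `G` is the prism `C_x □ 3K_2`, and
it suffices to treat the prism `ZMod n × R` over any fixed-point-free involution `σ` of the
rows. Cut the rows between columns `0` and `1` and close them up with the rungs of columns
`0` and `1`: rows `j` and `σ j` then form a single cycle through all `2n` of their vertices.
The edges left over, the `0`–`1` row edges and the rungs of columns `2, …, n - 1`, pair every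
vertex with exactly one other, so they form a perfect matching.
-/

open SimpleGraph Function

theorem one_ne_zero_of_two_ne_zero {M : Type*} [AddMonoidWithOne M] (h2 : (2 : M) ≠ 0) :
    (1 : M) ≠ 0 :=
  fun h1 => h2 (by rw [← one_add_one_eq_two, h1, add_zero])

theorem SimpleGraph.Reachable.mem_of_forall_adj_mem {V : Type*} {G : SimpleGraph V}
    {S : Set V} (hS : ∀ ⦃a b⦄, a ∈ S → G.Adj a b → b ∈ S) {a b : V} (h : G.Reachable a b)
    (ha : a ∈ S) : b ∈ S := by
  rw [reachable_iff_reflTransGen] at h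
  induction h with
  | refl => exact ha
  | tail _ hbc ih => exact hS ih hbc

theorem ZMod.reachable_of_adj_add_one {V : Type*} {G : SimpleGraph V} {n : ℕ} [NeZero n]
    {f : ZMod n → V} (hf : ∀ k ≠ 0, G.Adj (f k) (f (k + 1))) (k l : ZMod n) :
    G.Reachable (f k) (f l) := by
  suffices h : ∀ m : ℕ, G.Reachable (f 1) (f (1 + m)) by
    have hk := h (k - 1).val
    have hl := h (l - 1).val
    simp only [ZMod.natCast_zmod_val, add_sub_cancel] at hk hl
    exact hk.symm.trans hl
  intro m
  induction m with
  | zero => simp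
  | succ m ih =>
    rw [Nat.cast_succ, ← add_assoc]
    by_cases h0 : 1 + (m : ZMod n) = 0
    · rw [h0, zero_add]
    · exact ih.trans (hf _ h0).reachable

theorem SimpleGraph.neighborSet_fromRel_eq_apply {V : Type*} {f : V → V} (hf : Involutive f)
    (hne : ∀ a, f a ≠ a) (a : V) : (fromRel fun a b => b = f a).neighborSet a = {f a} := by
  ext b
  rw [mem_neighborSet, fromRel_adj, Set.mem_singleton_iff]
  constructor
  · rintro ⟨-, h | rfl⟩
    · exact h
    · exact (hf b).symm
  · rintro rfl
    exact ⟨(hne a).symm, Or.inl rfl⟩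

section Prism

variable {R : Type*} {n : ℕ} {σ : R → R}

variable (n σ) in
def prismGraph : SimpleGraph (ZMod n × R) :=
  fromRel fun a b => b = (a.1 + 1, a.2) ∨ b = (a.1, σ a.2)

variable (n σ) in
def prismCycleFactor : SimpleGraph (ZMod n × R) :=
  fromRel fun a b => (a.1 ≠ 0 ∧ b = (a.1 + 1, a.2)) ∨ ((a.1 = 0 ∨ a.1 = 1) ∧ b = (a.1, σ a.2))

variable (n σ) in
def prismPartner (a : ZMod n × R) : ZMod n × R :=
  if a.1 = 0 then (1, a.2) else if a.1 = 1 then (0, a.2) else (a.1, σ a.2)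

variable (n σ) in
def prismMatching : SimpleGraph (ZMod n × R) :=
  fromRel fun a b => b = prismPartner n σ a

theorem fromEdgeSet_eq_prismGraph :
    fromEdgeSet ({e | ∃ (k : ZMod n) (j : R), e = s((k, j), (k + 1, j))} ∪
      {e | ∃ (k : ZMod n) (j : R), e = s((k, j), (k, σ j))}) = prismGraph n σ := by
  ext ⟨k, j⟩ ⟨l, i⟩
  simp only [fromEdgeSet_adj, prismGraph, fromRel_adj, Set.mem_union, Set.mem_ofPred_eq,
    Sym2.eq, Sym2.rel_iff', Prod.mk.injEq, Prod.swap_prod_mk]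
  grind

theorem prismCycleFactor_sup_prismMatching :
    prismCycleFactor n σ ⊔ prismMatching n σ = prismGraph n σ := by
  ext ⟨k, j⟩ ⟨l, i⟩
  simp only [sup_adj, prismCycleFactor, prismMatching, prismGraph, prismPartner, fromRel_adj]
  grind

theorem disjoint_prismCycleFactor_prismMatching (h2 : (2 : ZMod n) ≠ 0) :
    Disjoint (prismCycleFactor n σ) (prismMatching n σ) := by
  have h1 := one_ne_zero_of_two_ne_zero h2
  rw [disjoint_iff_inf_le]
  rintro ⟨k, j⟩ ⟨l, i⟩ ⟨hc, hm⟩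
  simp only [prismCycleFactor, prismMatching, prismPartner, fromRel_adj] at hc hm
  grind

theorem ncard_neighborSet_prismCycleFactor (h2 : (2 : ZMod n) ≠ 0) (hσ : Involutive σ)
    (hσ' : ∀ j, σ j ≠ j) (a : ZMod n × R) :
    ((prismCycleFactor n σ).neighborSet a).ncard = 2 := by
  have h1 := one_ne_zero_of_two_ne_zero h2
  obtain ⟨k, j⟩ := a
  obtain ⟨b, c, hbc, h⟩ : ∃ b c, b ≠ c ∧
      ∀ l i, (prismCycleFactor n σ).Adj (k, j) (l, i) ↔ (l, i) = b ∨ (l, i) = c := by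
    simp only [prismCycleFactor, fromRel_adj]
    by_cases hk0 : k = 0
    · exact ⟨(-1, j), (0, σ j), by grind, by grind [Involutive]⟩
    by_cases hk1 : k = 1
    · exact ⟨(2, j), (1, σ j), by grind, by grind [Involutive]⟩
    · exact ⟨(k + 1, j), (k - 1, j), fun h => h2 (by linear_combination (Prod.ext_iff.1 h).1),
        by grind [Involutive]⟩
  have hN : (prismCycleFactor n σ).neighborSet (k, j) = {b, c} := by
    ext ⟨l, i⟩
    exact h l i
  rw [hN, Set.ncard_pair hbc]

theorem reachable_prismCycleFactor_iff [NeZero n] (hσ : Involutive σ) {k l : ZMod n}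
    {j i : R} : (prismCycleFactor n σ).Reachable (k, j) (l, i) ↔ i = j ∨ i = σ j := by
  constructor
  · intro h
    refine h.mem_of_forall_adj_mem (S := {c : ZMod n × R | c.2 = j ∨ c.2 = σ j}) ?_
      (Or.inl rfl)
    rintro ⟨k', j'⟩ ⟨l', i'⟩ hj' hadj
    simp only [Set.mem_ofPred_eq, prismCycleFactor, fromRel_adj] at hj' hadj ⊢
    grind [Involutive]
  · have hrow (r : R) (k l : ZMod n) : (prismCycleFactor n σ).Reachable (k, r) (l, r) :=
      ZMod.reachable_of_adj_add_one (f := fun k => (k, r)) (fun k hk => by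
        simp only [prismCycleFactor, fromRel_adj]
        grind) k l
    have hrung : (prismCycleFactor n σ).Reachable (0, j) (0, σ j) := by
      by_cases h : σ j = j
      · rw [h]
      · exact Adj.reachable (by simp [prismCycleFactor, fromRel_adj, Ne.symm h])
    rintro (rfl | rfl)
    · exact hrow i k l
    · exact ((hrow j k 0).trans hrung).trans (hrow _ 0 l)

theorem ncard_reachable_prismCycleFactor [NeZero n] (hσ : Involutive σ) (hσ' : ∀ j, σ j ≠ j)
    (a : ZMod n × R) : {b | (prismCycleFactor n σ).Reachable a b}.ncard = 2 * n := by
  obtain ⟨k, j⟩ := a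
  have h : {b | (prismCycleFactor n σ).Reachable (k, j) b} = Set.univ ×ˢ {j, σ j} := by
    ext ⟨l, i⟩
    simp [reachable_prismCycleFactor_iff hσ]
  rw [h, Set.ncard_prod, Set.ncard_univ, Nat.card_zmod, Set.ncard_pair (hσ' j).symm, mul_comm]

theorem prismPartner_involutive (h1 : (1 : ZMod n) ≠ 0) (hσ : Involutive σ) :
    Involutive (prismPartner n σ) := by
  rintro ⟨k, j⟩
  by_cases hk0 : k = 0
  · simp [prismPartner, hk0, h1]
  by_cases hk1 : k = 1
  · simp [prismPartner, hk1, h1]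
  · simp [prismPartner, hk0, hk1, hσ j]

theorem prismPartner_ne_self (h1 : (1 : ZMod n) ≠ 0) (hσ' : ∀ j, σ j ≠ j) (a : ZMod n × R) :
    prismPartner n σ a ≠ a := by
  obtain ⟨k, j⟩ := a
  by_cases hk0 : k = 0
  · simp [prismPartner, hk0, h1]
  by_cases hk1 : k = 1
  · simp [prismPartner, hk1, h1, h1.symm]
  · simp [prismPartner, hk0, hk1, hσ' j]

theorem ncard_neighborSet_prismMatching (h1 : (1 : ZMod n) ≠ 0) (hσ : Involutive σ)
    (hσ' : ∀ j, σ j ≠ j) (a : ZMod n × R) : ((prismMatching n σ).neighborSet a).ncard = 1 := by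
  rw [prismMatching, neighborSet_fromRel_eq_apply (prismPartner_involutive h1 hσ)
    (prismPartner_ne_self h1 hσ'), Set.ncard_singleton]

end Prism

def insideMate : ZMod 6 → ZMod 6 := ![2, 4, 0, 5, 1, 3]

theorem insideMate_involutive : Involutive insideMate := by
  intro j; revert j; decide

theorem insideMate_ne_self (j : ZMod 6) : insideMate j ≠ j := by revert j; decide

theorem setOf_inside_edges_eq (x : ℕ) :
    {e : Sym2 (ZMod x × ZMod 6) | ∃ k : ZMod x,
      e = s((k, 0), (k, 2)) ∨ e = s((k, 1), (k, 4)) ∨ e = s((k, 3), (k, 5))} =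
      {e | ∃ (k : ZMod x) (j : ZMod 6), e = s((k, j), (k, insideMate j))} := by
  ext e
  constructor
  · rintro ⟨k, rfl | rfl | rfl⟩
    exacts [⟨k, 0, rfl⟩, ⟨k, 1, rfl⟩, ⟨k, 3, rfl⟩]
  · rintro ⟨k, j, rfl⟩
    refine ⟨k, ?_⟩
    rcases (by decide : ∀ j : ZMod 6, j = 0 ∨ j = 1 ∨ j = 2 ∨ j = 3 ∨ j = 4 ∨ j = 5) j with
      rfl | rfl | rfl | rfl | rfl | rfl <;> simp [insideMate, Sym2.eq_swap]

theorem gDelta_zero_plus_f5_general (x : ℕ) (hx : 4 ≤ x)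
    (G : SimpleGraph (ZMod x × ZMod 6))
    (hG : G = SimpleGraph.fromEdgeSet
      ({e : Sym2 (ZMod x × ZMod 6) |
          ∃ (k : ZMod x) (j : ZMod 6), e = s((k, j), (k + 1, j))} ∪
       {e : Sym2 (ZMod x × ZMod 6) |
          ∃ k : ZMod x,
            e = s((k, 0), (k, 2)) ∨ e = s((k, 1), (k, 4)) ∨ e = s((k, 3), (k, 5))})) :
    ∃ E₁ E₂ : Set (Sym2 (ZMod x × ZMod 6)),
      Disjoint E₁ E₂ ∧ E₁ ∪ E₂ = G.edgeSet ∧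
      IsCycleFactor E₁ (2 * x) ∧ IsPerfectMatchingSet E₂ := by
  have : NeZero x := ⟨by omega⟩
  have h2 : (2 : ZMod x) ≠ 0 := by
    rw [Ne, ← Nat.cast_ofNat, ZMod.natCast_eq_zero_iff]
    exact fun h => absurd (Nat.le_of_dvd two_pos h) (by omega)
  have hG' : G = prismCycleFactor x insideMate ⊔ prismMatching x insideMate := by
    rw [hG, setOf_inside_edges_eq, fromEdgeSet_eq_prismGraph, prismCycleFactor_sup_prismMatching]
  refine ⟨(prismCycleFactor x insideMate).edgeSet, (prismMatching x insideMate).edgeSet,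
    disjoint_edgeSet.2 (disjoint_prismCycleFactor_prismMatching h2), by rw [hG', edgeSet_sup],
    ⟨fun a => ?_, fun a => ?_⟩, fun a => ?_⟩ <;> rw [fromEdgeSet_edgeSet]
  · exact ncard_neighborSet_prismCycleFactor h2 insideMate_involutive insideMate_ne_self a
  · exact ncard_reachable_prismCycleFactor insideMate_involutive insideMate_ne_self a
  · exact ncard_neighborSet_prismMatching (one_ne_zero_of_two_ne_zero h2) insideMate_involutive
      insideMate_ne_self a

theorem gDelta_zero_plus_f5 (x : ℕ) (hx : 4 ≤ x) (hev : Even x)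
    (G : SimpleGraph (ZMod x × ZMod 6))
    (hG : G = SimpleGraph.fromEdgeSet
      ({e : Sym2 (ZMod x × ZMod 6) |
          ∃ (k : ZMod x) (j : ZMod 6), e = s((k, j), (k + 1, j))} ∪
       {e : Sym2 (ZMod x × ZMod 6) |
          ∃ k : ZMod x,
            e = s((k, 0), (k, 2)) ∨ e = s((k, 1), (k, 4)) ∨ e = s((k, 3), (k, 5))})) :
    ∃ E₁ E₂ : Set (Sym2 (ZMod x × ZMod 6)),
      Disjoint E₁ E₂ ∧ E₁ ∪ E₂ = G.edgeSet ∧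
      IsCycleFactor E₁ (2 * x) ∧ IsPerfectMatchingSet E₂ :=
  gDelta_zero_plus_f5_general x hx G hG
end

section
/- For every even integer x ≥ 4, there exist x − 1 Hamiltonian cycles of the complete graph K_x such that every edge of K_x lies in exactly two of these cycles (equivalently, the doubled complete graph 2K_x can be decomposed into Hamilton cycles). -/
open SimpleGraph

theorem isCycleFactor_edgeSet_of_iso {V : Type*} {G : SimpleGraph V} {N : ℕ} (hN : 3 ≤ N)
    (e : G ≃g cycleGraph N) : IsCycleFactor G.edgeSet N := by
  obtain ⟨n, rfl⟩ : ∃ n, N = n + 3 := ⟨N - 3, by omega⟩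
  rw [IsCycleFactor, fromEdgeSet_edgeSet]
  refine ⟨fun a => ?_, fun a => ?_⟩
  · have hnbhd : {b | G.Adj a b} = e.symm '' (cycleGraph (n + 3)).neighborSet (e a) := by
      ext b
      simp only [Set.mem_ofPred_eq, Set.mem_image, mem_neighborSet, ← e.symm.map_adj_iff,
        RelIso.symm_apply_apply]
      exact ⟨fun h => ⟨e b, by simpa using h, by simp⟩, by rintro ⟨c, h, rfl⟩; exact h⟩
    rw [hnbhd, Set.ncard_image_of_injective _ e.symm.injective, cycleGraph_neighborSet,
      Set.ncard_pair]
    simp [sub_eq_iff_eq_add, add_assoc, Fin.ext_iff, Fin.val_add, Nat.mod_eq_of_lt]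
  · have hconn : G.Connected := e.connected_iff.2 cycleGraph_connected
    simp only [hconn.preconnected a, Set.ofPred_true, Set.ncard_univ, Nat.card_congr e.toEquiv,
      Nat.card_eq_fintype_card, Fintype.card_fin]

theorem ZMod.intCast_eq_intCast_iff_of_abs_sub_lt {n : ℕ} {a b : ℤ} (h : |a - b| < 2 * n) :
    (a : ZMod n) = b ↔ a = b ∨ a = b + n ∨ a = b - n := by
  obtain ⟨h₁, h₂⟩ := abs_lt.1 h
  rw [ZMod.intCast_eq_intCast_iff_dvd_sub]
  constructor
  · rintro ⟨c, hc⟩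
    have : -2 < c := by nlinarith
    have : c < 2 := by nlinarith
    obtain rfl | rfl | rfl : c = -1 ∨ c = 0 ∨ c = 1 := by omega
    all_goals omega
  · rintro (h | h | h)
    · exact ⟨0, by omega⟩
    · exact ⟨-1, by omega⟩
    · exact ⟨1, by omega⟩

namespace Walecki

-- `0, 1, -1, 2, -2, …`
def zigzag (k : ℕ) : ℤ := if k % 2 = 0 then -((k : ℤ) / 2) else ((k : ℤ) + 1) / 2

lemma eq_of_cast_zigzag_eq {m k l : ℕ} (hk : k ≤ 2 * m) (hl : l ≤ 2 * m)
    (h : (zigzag k : ZMod (2 * m + 1)) = zigzag l) : k = l := by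
  rw [ZMod.intCast_eq_intCast_iff_of_abs_sub_lt
    (by rw [abs_lt]; unfold zigzag; split_ifs <;> omega)] at h
  unfold zigzag at h
  split_ifs at h <;> omega

lemma cast_zigzag_step_eq_iff {m k : ℕ} (hk : k < 2 * m) (r : ZMod (2 * m + 1)) :
    ((zigzag (k + 1) - zigzag k : ℤ) : ZMod (2 * m + 1)) = r ↔
      (k % 2 = 0 ∧ k + 1 = r.val) ∨ (k % 2 = 1 ∧ k + 1 + r.val = 2 * m + 1) := by
  have hr := r.val_lt
  conv_lhs => rw [← ZMod.natCast_zmod_val r, ← Int.cast_natCast]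
  rw [ZMod.intCast_eq_intCast_iff_of_abs_sub_lt
    (by rw [abs_lt]; unfold zigzag; split_ifs <;> omega)]
  unfold zigzag
  split_ifs <;> omega

variable (m : ℕ)

def vertex (i : ZMod (2 * m + 1)) (k : Fin (2 * m + 2)) : Option (ZMod (2 * m + 1)) :=
  if (k : ℕ) ≤ 2 * m then some (i + zigzag k) else none

lemma vertex_bijective (i : ZMod (2 * m + 1)) : Function.Bijective (vertex m i) := by
  refine (Fintype.bijective_iff_injective_and_card _).2 ⟨fun k l h => ?_, by simp⟩
  unfold vertex at h
  split_ifs at h with hk hl hl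
  · exact Fin.ext (eq_of_cast_zigzag_eq hk hl (by simpa using h))
  · exact Fin.ext (by omega)

noncomputable def vertexEquiv (i : ZMod (2 * m + 1)) :
    Fin (2 * m + 2) ≃ Option (ZMod (2 * m + 1)) :=
  Equiv.ofBijective _ (vertex_bijective m i)

noncomputable def hamCycle (i : ZMod (2 * m + 1)) : SimpleGraph (Option (ZMod (2 * m + 1))) :=
  (cycleGraph (2 * m + 2)).map (vertexEquiv m i).toEmbedding

variable {m} {i : ZMod (2 * m + 1)}

lemma hamCycle_adj_iff {a b : Option (ZMod (2 * m + 1))} :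
    (hamCycle m i).Adj a b ↔ ∃ k : Fin (2 * m + 2),
      (a = vertex m i k ∧ b = vertex m i (k + 1)) ∨
        (b = vertex m i k ∧ a = vertex m i (k + 1)) := by
  rw [hamCycle, map_adj]
  constructor
  · rintro ⟨k, l, hkl | hkl, rfl, rfl⟩
    · obtain rfl : k = l + 1 := by rw [← hkl]; abel
      exact ⟨l, Or.inr ⟨rfl, rfl⟩⟩
    · obtain rfl : l = k + 1 := by rw [← hkl]; abel
      exact ⟨k, Or.inl ⟨rfl, rfl⟩⟩
  · rintro ⟨k, ⟨rfl, rfl⟩ | ⟨rfl, rfl⟩⟩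
    · exact ⟨k, k + 1, Or.inr (add_sub_cancel_left k 1), rfl, rfl⟩
    · exact ⟨k + 1, k, Or.inl (add_sub_cancel_left k 1), rfl, rfl⟩

lemma vertex_add_one (k : Fin (2 * m + 2)) : vertex m i (k + 1) =
    if (k : ℕ) < 2 * m then some (i + zigzag (k + 1))
    else if (k : ℕ) = 2 * m then none else some i := by
  have hk := k.isLt
  unfold vertex
  rw [Fin.val_add_one]
  simp only [Fin.ext_iff, Fin.val_last]
  split_ifs <;> first | rfl | omega | simp [zigzag]

lemma hamCycle_adj_some_some_iff {u v : ZMod (2 * m + 1)} :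
    (hamCycle m i).Adj (some u) (some v) ↔ ∃ k < 2 * m,
      (u = i + zigzag k ∧ v = i + zigzag (k + 1)) ∨
        (v = i + zigzag k ∧ u = i + zigzag (k + 1)) := by
  rw [hamCycle_adj_iff]
  constructor
  · rintro ⟨k, h⟩
    rw [vertex_add_one] at h
    unfold vertex at h
    split_ifs at h with h₁ h₂ <;>
      simp only [Option.some_inj, false_and, and_false, or_self] at h
    · exact ⟨k, h₂, h⟩
    · omega
  · rintro ⟨k, hk, h⟩
    refine ⟨⟨k, by omega⟩, ?_⟩
    rw [vertex_add_one]
    simp only [vertex, if_pos hk, if_pos hk.le, Option.some_inj]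
    exact h

lemma hamCycle_adj_none_some_iff {v : ZMod (2 * m + 1)} :
    (hamCycle m i).Adj none (some v) ↔ v = i ∨ v = i - m := by
  have hlast : ((i + zigzag (2 * m) : ZMod (2 * m + 1))) = i - m := by
    rw [show zigzag (2 * m) = -m by simp [zigzag]]
    push_cast
    ring
  rw [hamCycle_adj_iff]
  constructor
  · rintro ⟨k, h⟩
    rw [vertex_add_one] at h
    unfold vertex at h
    split_ifs at h <;>
      simp only [Option.some_inj, false_and, and_false, or_self, true_and, and_true,
        or_false, false_or] at h
    all_goals first
      | omega
      | exact Or.inl h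
      | exact Or.inr (by rw [h, show (k : ℕ) = 2 * m by omega, hlast])
  · rintro (rfl | rfl)
    · exact ⟨Fin.last _, Or.inl ⟨by simp [vertex], by rw [vertex_add_one]; simp⟩⟩
    · exact ⟨⟨2 * m, by omega⟩,
        Or.inr ⟨by simp [vertex, hlast], by rw [vertex_add_one]; simp⟩⟩

lemma eq_add_zigzag_iff {n k : ℕ} {i u v : ZMod n} :
    (u = i + zigzag k ∧ v = i + zigzag (k + 1)) ↔
      (i = u - zigzag k ∧ ((zigzag (k + 1) - zigzag k : ℤ) : ZMod n) = v - u) := by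
  constructor
  · rintro ⟨rfl, rfl⟩
    constructor
    · ring
    · push_cast; ring
  · rintro ⟨rfl, h⟩
    push_cast at h
    constructor
    · ring
    · linear_combination -h

lemma ncard_setOf_adj_none_some (hm : 1 ≤ m) (v : ZMod (2 * m + 1)) :
    {i | (hamCycle m i).Adj none (some v)}.ncard = 2 := by
  have hset : {i | (hamCycle m i).Adj none (some v)} = {v, v + m} := by
    ext i
    simp only [Set.mem_ofPred_eq, hamCycle_adj_none_some_iff, Set.mem_insert_iff,
      Set.mem_singleton_iff]
    constructor <;> rintro (rfl | rfl) <;> simp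
  rw [hset, Set.ncard_pair]
  rw [ne_eq, left_eq_add, ZMod.natCast_eq_zero_iff]
  intro h
  have := Nat.le_of_dvd (by omega) h
  omega

lemma ncard_setOf_adj_some_some {u v : ZMod (2 * m + 1)} {t : ℕ} (h : (v - u).val = 2 * t + 1) :
    {i | (hamCycle m i).Adj (some u) (some v)}.ncard = 2 := by
  have hlt := (v - u).val_lt
  have hne : v - u ≠ 0 := by rintro h0; simp [h0] at h
  have huv : (u - v).val = 2 * m - 2 * t := by
    rw [← neg_sub, ZMod.neg_val, if_neg hne]
    omega
  have hset : {i | (hamCycle m i).Adj (some u) (some v)} =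
      {u - zigzag (2 * t), u - zigzag (2 * m - 1 - 2 * t)} := by
    ext i
    simp only [Set.mem_ofPred_eq, hamCycle_adj_some_some_iff, Set.mem_insert_iff,
      Set.mem_singleton_iff, eq_add_zigzag_iff]
    constructor
    · rintro ⟨k, hk, ⟨rfl, hstep⟩ | ⟨rfl, hstep⟩⟩
      · rw [cast_zigzag_step_eq_iff hk, h] at hstep
        obtain rfl | rfl : k = 2 * t ∨ k = 2 * m - 1 - 2 * t := by omega
        exacts [Or.inl rfl, Or.inr rfl]
      · rw [cast_zigzag_step_eq_iff hk, huv] at hstep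
        omega
    · rintro (rfl | rfl)
      · exact ⟨2 * t, by omega,
          Or.inl ⟨rfl, (cast_zigzag_step_eq_iff (by omega) _).2 (by omega)⟩⟩
      · exact ⟨2 * m - 1 - 2 * t, by omega,
          Or.inl ⟨rfl, (cast_zigzag_step_eq_iff (by omega) _).2 (by omega)⟩⟩
  rw [hset, Set.ncard_pair]
  intro heq
  have := eq_of_cast_zigzag_eq (m := m) (k := 2 * t) (l := 2 * m - 1 - 2 * t) (by omega) (by omega)
    (sub_right_injective heq)
  omega

lemma ncard_setOf_mem_edgeSet (hm : 1 ≤ m) {e : Sym2 (Option (ZMod (2 * m + 1)))}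
    (he : e ∈ (⊤ : SimpleGraph _).edgeSet) : {i | e ∈ (hamCycle m i).edgeSet}.ncard = 2 := by
  induction e using Sym2.ind with
  | _ a b =>
  have hab : a ≠ b := by simpa using he
  have hswap : {i | (hamCycle m i).Adj b a} = {i | (hamCycle m i).Adj a b} := by
    ext i; exact (hamCycle m i).adj_comm b a
  simp only [mem_edgeSet]
  match a, b with
  | none, none => exact absurd rfl hab
  | none, some v => exact ncard_setOf_adj_none_some hm v
  | some u, none => rw [← hswap]; exact ncard_setOf_adj_none_some hm u
  | some u, some v =>
    have hne : v - u ≠ 0 := sub_ne_zero.2 fun h => hab (by rw [h])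
    have hlt := (v - u).val_lt
    rcases Nat.even_or_odd' (v - u).val with ⟨t, ht | ht⟩
    · rw [← hswap]
      refine ncard_setOf_adj_some_some (t := m - t) ?_
      rw [← neg_sub, ZMod.neg_val, if_neg hne]
      omega
    · exact ncard_setOf_adj_some_some ht

end Walecki

open Walecki in
theorem doubled_complete_graph_hamilton_decomposition (x : ℕ) (hx : 4 ≤ x)
    (hev : Even x) :
    ∃ C : Fin (x - 1) → Set (Sym2 (Fin x)),
      (∀ i, C i ⊆ (⊤ : SimpleGraph (Fin x)).edgeSet) ∧
      (∀ i, IsCycleFactor (C i) x) ∧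
      (∀ e ∈ (⊤ : SimpleGraph (Fin x)).edgeSet, {i | e ∈ C i}.ncard = 2) := by
  obtain ⟨m, rfl⟩ : ∃ m, x = 2 * m + 2 := by
    obtain ⟨r, rfl⟩ := hev
    exact ⟨r - 1, by omega⟩
  let φ : Option (ZMod (2 * m + 1)) ≃ Fin (2 * m + 2) := Fintype.equivOfCardEq (by simp)
  let ι : Fin (2 * m + 2 - 1) ≃ ZMod (2 * m + 1) := Fintype.equivOfCardEq (by simp)
  refine ⟨fun j => ((hamCycle m (ι j)).map φ).edgeSet, fun j => edgeSet_mono le_top,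
    fun j => isCycleFactor_edgeSet_of_iso (by omega)
      ((Iso.map φ _).symm.trans (Iso.map (vertexEquiv m (ι j)) _).symm), fun e he => ?_⟩
  have hmem (i : ZMod (2 * m + 1)) :
      e ∈ ((hamCycle m i).map φ).edgeSet ↔ e.map φ.symm ∈ (hamCycle m i).edgeSet :=
    (Iso.map φ _).symm.map_mem_edgeSet_iff.symm
  change (ι ⁻¹' {i | e ∈ ((hamCycle m i).map φ).edgeSet}).ncard = 2
  simp only [hmem]
  rw [Set.ncard_preimage_of_injective_subset_range ι.injective (by simp),
    ncard_setOf_mem_edgeSet (by omega)]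
  simpa [Sym2.isDiag_map φ.symm.injective] using he
end

section
/- Let a, b ≥ 3, w ≥ 1, x ≥ 1 and t ≥ 2 be integers. If the complete equipartite graph K_{(x:t)} admits a C_a-factorization, and the graph C_{(w:a)} admits a C_b-factorization, then the complete equipartite graph K_{(wx:t)} admits a C_b-factorization. -/
/-- A `C_m`-factorization of `G`: a partition of the edge set of `G` into
`C_m`-factors. -/
def HasCycleFactorization {V : Type*} (G : SimpleGraph V) (m : ℕ) : Prop :=
  ∃ (n : ℕ) (P : Fin n → Set (Sym2 V)),
    (∀ i, P i ⊆ G.edgeSet) ∧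
    (∀ e ∈ G.edgeSet, ∃! i, e ∈ P i) ∧
    (∀ i, IsCycleFactor (P i) m)

/-- The complete equipartite graph `K_{(h:u)}` with `u` parts of size `h`:
two vertices are adjacent iff they lie in different parts. -/
def completeEquipartite (h u : ℕ) : SimpleGraph (Fin u × Fin h) :=
  SimpleGraph.fromRel (fun p q => p.1 ≠ q.1)

/-- The graph `C_{(w:a)}` obtained from the cycle of length `a` by blowing each
vertex up into `w` vertices: `(u, i)` and `(v, j)` are adjacent iff `u` and `v`
are adjacent on the `a`-cycle. -/
def cycleBlowup (w a : ℕ) : SimpleGraph (ZMod a × Fin w) :=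
  SimpleGraph.fromRel (fun p q => p.1 = q.1 + 1)


set_option linter.unusedSectionVars false
set_option maxHeartbeats 1000000

open SimpleGraph

section Walk

variable {V : Type*}

open Classical in
/-- the neighbour of `cur` other than `prev` (when it exists uniquely) -/
noncomputable def nxt (G : SimpleGraph V) (prev cur : V) : V :=
  if h : ∃ z, G.Adj cur z ∧ z ≠ prev ∧ ∀ y, G.Adj cur y → y ≠ prev → y = z then h.choose
  else cur

lemma nxt_spec {G : SimpleGraph V} (hdeg : ∀ v, {u | G.Adj v u}.ncard = 2)
    {prev cur : V} (h : G.Adj cur prev) :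
    G.Adj cur (nxt G prev cur) ∧ nxt G prev cur ≠ prev ∧
      ∀ y, G.Adj cur y → y ≠ prev → y = nxt G prev cur := by
  obtain ⟨x, y, hxy, hset⟩ := Set.ncard_eq_two.mp (hdeg cur)
  have hex : ∃ z, G.Adj cur z ∧ z ≠ prev ∧ ∀ y', G.Adj cur y' → y' ≠ prev → y' = z := by
    have hprev : prev ∈ ({x, y} : Set V) := hset ▸ h
    have hx : G.Adj cur x := by have : x ∈ {u | G.Adj cur u} := hset ▸ (by simp); exact this
    have hy : G.Adj cur y := by have : y ∈ {u | G.Adj cur u} := hset ▸ (by simp); exact this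
    rcases hprev with h1 | h1
    · exact ⟨y, hy, by subst h1; exact Ne.symm hxy, fun y' hy' hne => by
        have : y' ∈ ({x, y} : Set V) := hset ▸ hy'
        simp_all⟩
    · exact ⟨x, hx, by simp_all, fun y' hy' hne => by
        have : y' ∈ ({x, y} : Set V) := hset ▸ hy'
        simp_all⟩
  rw [show nxt G prev cur = hex.choose from by rw [nxt, dif_pos hex]]
  exact hex.choose_spec

lemma nxt_nxt {G : SimpleGraph V} (hdeg : ∀ v, {u | G.Adj v u}.ncard = 2)
    {prev cur : V} (h : G.Adj cur prev) :
    nxt G (nxt G prev cur) cur = prev := by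
  obtain ⟨h1, h2, h3⟩ := nxt_spec hdeg h
  exact ((nxt_spec hdeg h1).2.2 prev h (Ne.symm h2)).symm

/-- the walk starting `p, q, ...` always continuing to the other neighbour -/
noncomputable def wlk (G : SimpleGraph V) (p q : V) : ℕ → V
  | 0 => p
  | 1 => q
  | (n+2) => nxt G (wlk G p q n) (wlk G p q (n+1))

variable {G : SimpleGraph V} (hdeg : ∀ v, {u | G.Adj v u}.ncard = 2)
  {p q : V} (hpq : G.Adj p q)

include hdeg hpq

lemma wlk_adj : ∀ n, G.Adj (wlk G p q n) (wlk G p q (n+1)) := by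
  intro n
  induction n with
  | zero => exact hpq
  | succ n ih =>
    show G.Adj _ (nxt G (wlk G p q n) (wlk G p q (n+1)))
    exact (nxt_spec hdeg ih.symm).1

lemma wlk_ne2 : ∀ n, wlk G p q (n+2) ≠ wlk G p q n := by
  intro n
  exact (nxt_spec hdeg (wlk_adj hdeg hpq n).symm).2.1

lemma wlk_prev : ∀ n, nxt G (wlk G p q (n+2)) (wlk G p q (n+1)) = wlk G p q n := by
  intro n
  exact nxt_nxt hdeg (wlk_adj hdeg hpq n).symm

omit hdeg hpq in
lemma wlk_fwd {i j : ℕ} (h0 : wlk G p q i = wlk G p q j)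
    (h1 : wlk G p q (i+1) = wlk G p q (j+1)) :
    ∀ k, wlk G p q (i+k) = wlk G p q (j+k) := by
  have key : ∀ k, wlk G p q (i+k) = wlk G p q (j+k) ∧
      wlk G p q (i+k+1) = wlk G p q (j+k+1) := by
    intro k
    induction k with
    | zero => exact ⟨h0, h1⟩
    | succ k ih =>
      refine ⟨ih.2, ?_⟩
      have e1 : i + (k+1) + 1 = (i + k) + 2 := by ring
      have e2 : j + (k+1) + 1 = (j + k) + 2 := by ring
      rw [e1, e2]
      show nxt G _ _ = nxt G _ _
      rw [ih.1, ih.2]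
  exact fun k => (key k).1

lemma wlk_bwd {i j : ℕ} (h1 : wlk G p q (i+1) = wlk G p q (j+1))
    (h2 : wlk G p q (i+2) = wlk G p q (j+2)) :
    wlk G p q i = wlk G p q j := by
  rw [← wlk_prev hdeg hpq i, ← wlk_prev hdeg hpq j, h1, h2]

end Walk

section Period

variable {V : Type*} [Finite V] {G : SimpleGraph V}
  (hdeg : ∀ v, {u | G.Adj v u}.ncard = 2) {p q : V} (hpq : G.Adj p q)

include hdeg hpq

lemma wlk_shift_down : ∀ i d, wlk G p q (i + d) = wlk G p q i →
    wlk G p q (i + d + 1) = wlk G p q (i + 1) →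
    wlk G p q d = wlk G p q 0 ∧ wlk G p q (d + 1) = wlk G p q 1 := by
  intro i
  induction i with
  | zero => intro d h0 h1; exact ⟨by simpa using h0, by simpa using h1⟩
  | succ i ih =>
    intro d h0 h1
    have h0' : wlk G p q (i + d + 1) = wlk G p q (i + 1) := by
      rw [show i + d + 1 = i + 1 + d from by omega]; exact h0
    have h1' : wlk G p q (i + d + 2) = wlk G p q (i + 2) := by
      rw [show i + d + 2 = i + 1 + d + 1 from by omega]; exact h1
    exact ih d (wlk_bwd hdeg hpq h0' h1') h0'

lemma wlk_exists_period : ∃ d, 0 < d ∧ wlk G p q d = wlk G p q 0 ∧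
    wlk G p q (d + 1) = wlk G p q 1 := by
  obtain ⟨i, j, hne, hF⟩ := Finite.exists_ne_map_eq_of_infinite
    (fun n : ℕ => (wlk G p q n, wlk G p q (n+1)))
  wlog hij : i < j generalizing i j
  · exact this j i hne.symm hF.symm (by omega)
  have h0 : wlk G p q (i + (j - i)) = wlk G p q i := by
    rw [show i + (j - i) = j from by omega]; exact (congrArg Prod.fst hF).symm
  have h1 : wlk G p q (i + (j - i) + 1) = wlk G p q (i + 1) := by
    rw [show i + (j - i) = j from by omega]; exact (congrArg Prod.snd hF).symm
  obtain ⟨e0, e1⟩ := wlk_shift_down hdeg hpq i (j - i) h0 h1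
  exact ⟨j - i, by omega, e0, e1⟩

end Period

set_option linter.unusedSectionVars false in
lemma cycle_label {V : Type*} [Finite V] {G : SimpleGraph V} {a : ℕ} (ha : 3 ≤ a)
    (hdeg : ∀ v, {u | G.Adj v u}.ncard = 2)
    (hcomp : ∀ v, {u | G.Reachable v u}.ncard = a) (p : V) :
    ∃ g : ZMod a → V, Function.Injective g ∧ g 0 = p ∧
      (∀ k, G.Adj (g k) (g (k+1))) ∧
      (∀ k u, G.Adj (g k) u → u = g (k+1) ∨ u = g (k-1)) ∧
      (∀ u, G.Reachable p u ↔ u ∈ Set.range g) := by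
  classical
  obtain ⟨q, hpq⟩ : ∃ q, G.Adj p q := by
    have h2 := hdeg p
    have : {u | G.Adj p u}.Nonempty := by
      rw [← Set.ncard_pos (Set.toFinite _)]; omega
    exact this
  set f := wlk G p q with hf
  obtain hPex := wlk_exists_period hdeg hpq
  set P := Nat.find hPex with hPdef
  have hP : 0 < P ∧ f P = f 0 ∧ f (P + 1) = f 1 := Nat.find_spec hPex
  have hPmin : ∀ d, d < P → ¬(0 < d ∧ f d = f 0 ∧ f (d + 1) = f 1) :=
    fun d hd => Nat.find_min hPex hd
  have per : ∀ n, f (n + P) = f n := by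
    intro n
    have := wlk_fwd (G := G) (p := p) (q := q) (i := P) (j := 0)
      (by simpa using hP.2.1) (by simpa using hP.2.2) n
    simpa [Nat.add_comm] using this
  have per_mul : ∀ m n, f (n + m * P) = f n := by
    intro m
    induction m with
    | zero => simp
    | succ m ih =>
      intro n
      rw [show n + (m + 1) * P = (n + m * P) + P from by ring, per, ih]
  have fmod : ∀ n, f n = f (n % P) := by
    intro n
    conv_lhs => rw [show n = n % P + (n / P) * P from (Nat.mod_add_div' n P).symm]
    exact per_mul _ _
  have P3 : 3 ≤ P := by
    rcases hP with ⟨hP0, hP1, hP2⟩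
    by_contra hlt
    interval_cases P
    · exact (G.ne_of_adj (wlk_adj hdeg hpq 0)) hP1.symm
    · exact (wlk_ne2 hdeg hpq 0) hP1
  have nbhd : ∀ n, {u | G.Adj (f n) u} = {f (n + 1), f (n + (P - 1))} := by
    intro n
    have hA1 : G.Adj (f n) (f (n + 1)) := wlk_adj hdeg hpq n
    have hA2 : G.Adj (f n) (f (n + (P - 1))) := by
      have h := wlk_adj hdeg hpq (n + (P - 1))
      rw [← hf, show n + (P - 1) + 1 = n + P from by omega, per n] at h
      exact h.symm
    have hne : f (n + 1) ≠ f (n + (P - 1)) := by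
      have h := wlk_ne2 hdeg hpq (n + (P - 1))
      rw [← hf, show n + (P - 1) + 2 = (n + 1) + P from by omega, per (n + 1)] at h
      exact h
    refine (Set.eq_of_subset_of_ncard_le ?_ ?_ (Set.toFinite _)).symm
    · intro u hu
      rcases hu with h | h
      · exact h ▸ hA1
      · exact (Set.mem_singleton_iff.mp h) ▸ hA2
    · rw [hdeg, Set.ncard_pair hne]
  have inj : ∀ i j, i < j → j < P → f i ≠ f j := by
    intro i j hij hjP heq
    have hj1 : f (j + 1) ∈ {u | G.Adj (f i) u} := by
      rw [heq]; exact wlk_adj hdeg hpq j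
    rw [nbhd i] at hj1
    rcases hj1 with hA | hB
    · obtain ⟨e0, e1⟩ := wlk_shift_down hdeg hpq i (j - i)
        (by rw [show i + (j - i) = j from by omega]; exact heq.symm)
        (by rw [show i + (j - i) + 1 = j + 1 from by omega]; exact hA)
      exact hPmin (j - i) (by omega) ⟨by omega, e0, e1⟩
    · replace hB : f (j + 1) = f (i + (P - 1)) := Set.mem_singleton_iff.mp hB
      set M := i + (P - 1) with hM
      have hj0 : f j = f (M + 1) := by
        rw [show M + 1 = i + P from by omega, per i]; exact heq.symm
      have key : ∀ k, (k ≤ M + 1 → f (j + k) = f (M + 1 - k)) ∧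
          (k + 1 ≤ M + 1 → f (j + k + 1) = f (M + 1 - (k + 1))) := by
        intro k
        induction k with
        | zero =>
          refine ⟨fun _ => by simpa using hj0, fun _ => ?_⟩
          simpa using hB
        | succ k ih =>
          refine ⟨fun hk => ih.2 hk, fun hk2 => ?_⟩
          have e1 : f (j + k) = f (M + 1 - k) := ih.1 (by omega)
          have e2 : f (j + k + 1) = f (M - k) := by
            have h := ih.2 (by omega)
            rwa [show M + 1 - (k + 1) = M - k from by omega] at h
          show nxt G (f (j + k)) (f (j + k + 1)) = _
          rw [e1, e2]
          have hprev := wlk_prev hdeg hpq (M - k - 1)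
          rw [show M - k - 1 + 2 = M + 1 - k from by omega,
            show M - k - 1 + 1 = M - k from by omega] at hprev
          rw [hprev]
          congr 1
          omega
      have rev : ∀ k, k ≤ M + 1 → f (j + k) = f (M + 1 - k) := fun k hk => (key k).1 hk
      have hjM : j ≤ M := by omega
      set D := M + 1 - j with hD
      rcases Nat.even_or_odd D with hev | hod
      · obtain ⟨c, hc⟩ := hev
        have hc1 : 1 ≤ c := by omega
        have e2 := rev (c + 1) (by omega)
        have : f ((j + c - 1) + 2) = f (j + c - 1) := by
          rw [show (j + c - 1) + 2 = j + (c + 1) from by omega, e2,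
            show M + 1 - (c + 1) = j + c - 1 from by omega]
        exact wlk_ne2 hdeg hpq (j + c - 1) this
      · obtain ⟨c, hc⟩ := hod
        have e1 := rev c (by omega)
        have : f (j + c) = f (j + c + 1) := by
          rw [e1, show M + 1 - c = j + c + 1 from by omega]
        exact (G.ne_of_adj (wlk_adj hdeg hpq (j + c))) this
  have closure : ∀ {s u : V}, G.Adj s u → s ∈ Set.range f → u ∈ Set.range f := by
    intro s u hadj hs
    obtain ⟨n, rfl⟩ := hs
    have hmem : u ∈ {x | G.Adj (f n) x} := hadj
    rw [nbhd n] at hmem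
    rcases hmem with h' | h'
    · exact ⟨n + 1, h'.symm⟩
    · exact ⟨n + (P - 1), (Set.mem_singleton_iff.mp h').symm⟩
  have reach_range : ∀ u, G.Reachable p u → u ∈ Set.range f := by
    intro u hu
    rw [SimpleGraph.reachable_iff_reflTransGen] at hu
    induction hu with
    | refl => exact ⟨0, rfl⟩
    | tail _ h2 ih => exact closure h2 ih
  have range_reach : ∀ n, G.Reachable p (f n) := by
    intro n
    induction n with
    | zero => exact Reachable.refl p
    | succ n ih => exact ih.trans (wlk_adj hdeg hpq n).reachable
  have comp_eq : {u | G.Reachable p u} = f '' (Set.Iio P) := by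
    ext u
    constructor
    · intro hu
      obtain ⟨n, rfl⟩ := reach_range u hu
      exact ⟨n % P, by simpa [Set.mem_Iio] using Nat.mod_lt n (by omega), (fmod n).symm⟩
    · rintro ⟨n, hn, rfl⟩
      exact range_reach n
  have hinjOn : Set.InjOn f (Set.Iio P) := by
    intro i hi j hj hij
    rcases lt_trichotomy i j with h | h | h
    · exact absurd hij (inj i j h hj)
    · exact h
    · exact absurd hij.symm (inj j i h hi)
  have hPa : P = a := by
    have h := hcomp p
    rw [comp_eq, Set.ncard_image_of_injOn hinjOn,
      show (Set.Iio P) = ↑(Finset.Iio P) from by ext; simp, Set.ncard_coe_finset] at h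
    simpa using h
  haveI hNZ : NeZero a := ⟨by omega⟩
  haveI hF1 : Fact (1 < a) := ⟨by omega⟩
  have fmoda : ∀ n, f n = f (n % a) := by rw [← hPa]; exact fmod
  have nbhda : ∀ n, {u | G.Adj (f n) u} = {f (n + 1), f (n + (a - 1))} := by
    rw [← hPa]; exact nbhd
  have inja : ∀ i j, i < a → j < a → f i = f j → i = j := by
    rw [← hPa]
    intro i j hi hj hij
    rcases lt_trichotomy i j with h | h | h
    · exact absurd hij (inj i j h hj)
    · exact h
    · exact absurd hij.symm (inj j i h hi)
  refine ⟨fun k => f k.val, ?_, ?_, ?_, ?_, ?_⟩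
  · intro k l hkl
    exact ZMod.val_injective a (inja _ _ (ZMod.val_lt k) (ZMod.val_lt l) hkl)
  · show f (0 : ZMod a).val = p
    rw [ZMod.val_zero]
    rfl
  · intro k
    have hck : f ((k + 1).val) = f (k.val + 1) := by
      rw [ZMod.val_add, ZMod.val_one, ← fmoda]
    show G.Adj (f k.val) (f ((k + 1).val))
    rw [hck]
    exact wlk_adj hdeg hpq k.val
  · intro k u hu
    have hmem : u ∈ {u | G.Adj (f k.val) u} := hu
    rw [nbhda k.val] at hmem
    have hsub : f ((k - 1).val) = f (k.val + (a - 1)) := by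
      have hcast : (k - 1 : ZMod a) = k + ((a - 1 : ℕ) : ZMod a) := by
        have : ((a - 1 : ℕ) : ZMod a) = -1 := by
          rw [Nat.cast_sub (by omega), ZMod.natCast_self, Nat.cast_one]
          ring
        rw [this]
        ring
      rw [hcast, ZMod.val_add, ZMod.val_natCast,
        Nat.mod_eq_of_lt (show a - 1 < a from by omega)]
      exact (fmoda _).symm
    rcases hmem with h' | h'
    · left
      show u = f ((k + 1).val)
      rw [h', show f ((k + 1).val) = f (k.val + 1) from by
        rw [ZMod.val_add, ZMod.val_one, ← fmoda]]
    · right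
      show u = f ((k - 1).val)
      rw [Set.mem_singleton_iff.mp h', hsub]
  · intro u
    constructor
    · intro hu
      obtain ⟨n, rfl⟩ := reach_range u hu
      refine ⟨(n : ZMod a), ?_⟩
      show f ((n : ZMod a)).val = f n
      rw [ZMod.val_natCast]
      exact (fmoda n).symm
    · rintro ⟨k, rfl⟩
      exact range_reach k.val


theorem weighting_construction (a b w x t : ℕ) (ha : 3 ≤ a) (hb : 3 ≤ b)
    (hw : 1 ≤ w) (hx : 1 ≤ x) (ht : 2 ≤ t)
    (h1 : HasCycleFactorization (completeEquipartite x t) a)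
    (h2 : HasCycleFactorization (cycleBlowup w a) b) :
    HasCycleFactorization (completeEquipartite (w * x) t) b := by
  classical
  obtain ⟨n, P, hP1, hP2, hP3⟩ := h1
  obtain ⟨m, Q, hQ1, hQ2, hQ3⟩ := h2
  haveI hNZ : NeZero a := ⟨by omega⟩
  haveI hF1 : Fact (1 < a) := ⟨by omega⟩
  -- the vertex equivalence
  let δ : Fin t × Fin (w * x) ≃ (Fin t × Fin x) × Fin w :=
    { toFun := fun v => ((v.1, (finProdFinEquiv.symm v.2).2), (finProdFinEquiv.symm v.2).1)
      invFun := fun v => (v.1.1, finProdFinEquiv (v.2, v.1.2))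
      left_inv := by
        intro v
        have h2 : finProdFinEquiv ((finProdFinEquiv.symm v.2).1, (finProdFinEquiv.symm v.2).2)
            = v.2 := by
          rw [Prod.mk.eta]
          exact finProdFinEquiv.apply_symm_apply v.2
        exact Prod.ext rfl h2
      right_inv := by intro v; simp }
  -- labelings of the components of the factors of `K_{(x:t)}`
  have key : ∀ (i : Fin n) (r : Fin t × Fin x),
      ∃ g : ZMod a → Fin t × Fin x, Function.Injective g ∧ g 0 = r ∧
      (∀ k, (SimpleGraph.fromEdgeSet (P i)).Adj (g k) (g (k + 1))) ∧
      (∀ k u, (SimpleGraph.fromEdgeSet (P i)).Adj (g k) u → u = g (k + 1) ∨ u = g (k - 1)) ∧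
      (∀ u, (SimpleGraph.fromEdgeSet (P i)).Reachable r u ↔ u ∈ Set.range g) :=
    fun i r => cycle_label ha (hP3 i).1 (hP3 i).2 r
  choose g hg_inj hg_zero hg_adj hg_nbhd hg_reach using key
  -- representatives of components
  let st : Fin n → Setoid (Fin t × Fin x) := fun i =>
    ⟨(SimpleGraph.fromEdgeSet (P i)).Reachable,
      ⟨fun _ => SimpleGraph.Reachable.refl _, SimpleGraph.Reachable.symm,
        SimpleGraph.Reachable.trans⟩⟩
  let rep : Fin n → (Fin t × Fin x) → (Fin t × Fin x) := fun i p =>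
    Quotient.out (Quotient.mk (st i) p)
  have rep_reach : ∀ i p, (SimpleGraph.fromEdgeSet (P i)).Reachable (rep i p) p :=
    fun i p => Quotient.mk_out (s := st i) p
  have rep_congr : ∀ i p q', (SimpleGraph.fromEdgeSet (P i)).Reachable p q' →
      rep i p = rep i q' := by
    intro i p q' h
    show (Quotient.mk (st i) p).out = (Quotient.mk (st i) q').out
    rw [Quotient.sound (s := st i) h]
  -- labels
  let L : Fin n → (Fin t × Fin x) → ZMod a → (Fin t × Fin x) := fun i p => g i (rep i p)
  let ℓ : Fin n → (Fin t × Fin x) → ZMod a := fun i p => Function.invFun (L i p) p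
  have mem_rng : ∀ i p, p ∈ Set.range (L i p) :=
    fun i p => (hg_reach i (rep i p) p).mp (rep_reach i p)
  have Lℓ : ∀ i p, L i p (ℓ i p) = p := fun i p => Function.invFun_eq (mem_rng i p)
  have rep_idem : ∀ i p, rep i (rep i p) = rep i p :=
    fun i p => rep_congr i (rep i p) p (rep_reach i p)
  have rep_g : ∀ i p k, rep i (L i p k) = rep i p := by
    intro i p k
    have h1 : (SimpleGraph.fromEdgeSet (P i)).Reachable (rep i p) (L i p k) :=
      (hg_reach i (rep i p) _).mpr ⟨k, rfl⟩
    rw [← rep_congr i (rep i p) (L i p k) h1, rep_idem]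
  have ℓ_val : ∀ i p k, ℓ i (L i p k) = k := by
    intro i p k
    show Function.invFun (g i (rep i (L i p k))) (L i p k) = k
    rw [rep_g]
    exact Function.leftInverse_invFun (hg_inj i (rep i p)) k
  -- edge membership basics
  have Pi_ne : ∀ (i : Fin n) (p q' : Fin t × Fin x), s(p, q') ∈ P i → p ≠ q' := by
    intro i p q' hm heq
    subst heq
    exact (SimpleGraph.not_isDiag_of_mem_edgeSet _ (hP1 i hm)) (by simp)
  have Qj_ne : ∀ (j : Fin m) (z z' : ZMod a × Fin w), s(z, z') ∈ Q j → z ≠ z' := by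
    intro j z z' hm heq
    subst heq
    exact (SimpleGraph.not_isDiag_of_mem_edgeSet _ (hQ1 j hm)) (by simp)
  have GiAdj : ∀ (i : Fin n) (p q' : Fin t × Fin x),
      (SimpleGraph.fromEdgeSet (P i)).Adj p q' ↔ s(p, q') ∈ P i := by
    intro i p q'
    rw [SimpleGraph.fromEdgeSet_adj]
    exact ⟨fun h => h.1, fun h => ⟨h, Pi_ne i p q' h⟩⟩
  have HjAdj : ∀ (j : Fin m) (z z' : ZMod a × Fin w),
      (SimpleGraph.fromEdgeSet (Q j)).Adj z z' ↔ s(z, z') ∈ Q j := by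
    intro j z z'
    rw [SimpleGraph.fromEdgeSet_adj]
    exact ⟨fun h => h.1, fun h => ⟨h, Qj_ne j z z' h⟩⟩
  have labels_consec : ∀ (i : Fin n) (p q' : Fin t × Fin x), s(p, q') ∈ P i →
      (ℓ i q' = ℓ i p + 1 ∨ ℓ i q' = ℓ i p - 1) ∧ rep i q' = rep i p := by
    intro i p q' hm
    have hadj : (SimpleGraph.fromEdgeSet (P i)).Adj p q' := (GiAdj i p q').mpr hm
    have hrep : rep i q' = rep i p := (rep_congr i p q' hadj.reachable).symm
    have hadj' : (SimpleGraph.fromEdgeSet (P i)).Adj (L i p (ℓ i p)) q' := by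
      rw [Lℓ]; exact hadj
    rcases hg_nbhd i (rep i p) (ℓ i p) q' hadj' with h | h
    · exact ⟨Or.inl (by rw [h]; exact ℓ_val i p _), hrep⟩
    · exact ⟨Or.inr (by rw [h]; exact ℓ_val i p _), hrep⟩
  have consec_adj : ∀ (i : Fin n) (p : Fin t × Fin x) (k : ZMod a),
      s(L i p k, L i p (k + 1)) ∈ P i :=
    fun i p k => (GiAdj i _ _).mp (hg_adj i (rep i p) k)
  -- the blown-up label map
  let ψ : Fin n → ((Fin t × Fin x) × Fin w) → ZMod a × Fin w := fun i v => (ℓ i v.1, v.2)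
  have ψ_inj : ∀ (i : Fin n) (v v' : (Fin t × Fin x) × Fin w),
      rep i v.1 = rep i v'.1 → ψ i v = ψ i v' → v = v' := by
    intro i v v' hr hψ
    have h1 : ℓ i v.1 = ℓ i v'.1 := by
      have := congrArg Prod.fst hψ
      exact this
    have h2 : v.2 = v'.2 := by
      have := congrArg Prod.snd hψ
      exact this
    have h3 : v.1 = v'.1 := by
      have e1 := Lℓ i v.1
      have e2 := Lℓ i v'.1
      rw [← e1, ← e2]
      show g i (rep i v.1) (ℓ i v.1) = g i (rep i v'.1) (ℓ i v'.1)
      rw [hr, h1]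
    exact Prod.ext h3 h2
  -- the candidate factors
  let R : Fin n × Fin m → Set (Sym2 (Fin t × Fin (w * x))) := fun ij =>
    {e | ∃ u v : Fin t × Fin (w * x), e = s(u, v) ∧
      s((δ u).1, (δ v).1) ∈ P ij.1 ∧ s(ψ ij.1 (δ u), ψ ij.1 (δ v)) ∈ Q ij.2}
  have RAdj : ∀ (i : Fin n) (j : Fin m) (u v : Fin t × Fin (w * x)),
      (SimpleGraph.fromEdgeSet (R (i, j))).Adj u v ↔
        (s((δ u).1, (δ v).1) ∈ P i ∧ s(ψ i (δ u), ψ i (δ v)) ∈ Q j) := by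
    intro i j u v
    rw [SimpleGraph.fromEdgeSet_adj]
    constructor
    · rintro ⟨⟨u', v', he, hm1, hm2⟩, hne⟩
      rcases Sym2.eq_iff.mp he with ⟨rfl, rfl⟩ | ⟨rfl, rfl⟩
      · exact ⟨hm1, hm2⟩
      · exact ⟨Sym2.eq_swap ▸ hm1, Sym2.eq_swap ▸ hm2⟩
    · rintro ⟨hm1, hm2⟩
      refine ⟨⟨u, v, rfl, hm1, hm2⟩, fun heq => ?_⟩
      exact Qj_ne _ _ _ hm2 (by rw [heq])
  -- lifting edges of `Q j` through `ψ`
  have lift : ∀ (i : Fin n) (j : Fin m) (u : Fin t × Fin (w * x)) (z : ZMod a × Fin w),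
      (SimpleGraph.fromEdgeSet (Q j)).Adj (ψ i (δ u)) z →
      ∃ v, (SimpleGraph.fromEdgeSet (R (i, j))).Adj u v ∧ ψ i (δ v) = z := by
    intro i j u z hadj
    have hmQ : s(ψ i (δ u), z) ∈ Q j := (HjAdj j _ _).mp hadj
    have hCB : (cycleBlowup w a).Adj (ψ i (δ u)) z :=
      (SimpleGraph.mem_edgeSet _).mp (hQ1 j hmQ)
    rw [cycleBlowup, SimpleGraph.fromRel_adj] at hCB
    set p := (δ u).1 with hp
    set q' := L i p z.1 with hq'
    have hℓq : ℓ i q' = z.1 := ℓ_val i p z.1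
    have hPadj : s(p, q') ∈ P i := by
      rcases hCB.2 with h | h
      · -- ℓ i p = z.1 + 1
        have hc := consec_adj i p z.1
        have : L i p (z.1 + 1) = p := by rw [← h]; exact Lℓ i p
        rw [this] at hc
        exact Sym2.eq_swap ▸ hc
      · -- z.1 = ℓ i p + 1
        have hc := consec_adj i p (ℓ i p)
        rw [Lℓ i p, ← h] at hc
        exact hc
    refine ⟨δ.symm (q', z.2), ?_, ?_⟩
    · rw [RAdj]
      have hδs : δ (δ.symm (q', z.2)) = (q', z.2) := δ.apply_symm_apply _
      constructor
      · rw [hδs]; exact hPadj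
      · rw [hδs]
        show s(ψ i (δ u), (ℓ i q', z.2)) ∈ Q j
        rw [hℓq]
        exact hmQ
    · rw [δ.apply_symm_apply]
      show (ℓ i q', z.2) = z
      rw [hℓq]
  -- confinement of components
  have adj_rep : ∀ (i : Fin n) (j : Fin m) (u v : Fin t × Fin (w * x)),
      (SimpleGraph.fromEdgeSet (R (i, j))).Adj u v → rep i (δ v).1 = rep i (δ u).1 := by
    intro i j u v h
    exact ((labels_consec i _ _ ((RAdj i j u v).mp h).1).2)
  have reach_rep : ∀ (i : Fin n) (j : Fin m) (u v : Fin t × Fin (w * x)),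
      (SimpleGraph.fromEdgeSet (R (i, j))).Reachable u v →
        rep i (δ v).1 = rep i (δ u).1 := by
    intro i j u v h
    rw [SimpleGraph.reachable_iff_reflTransGen] at h
    induction h with
    | refl => rfl
    | tail _ h2 ih => rw [adj_rep i j _ _ h2, ih]
  have adj_to : ∀ (i : Fin n) (j : Fin m) (u v : Fin t × Fin (w * x)),
      (SimpleGraph.fromEdgeSet (R (i, j))).Adj u v →
      (SimpleGraph.fromEdgeSet (Q j)).Adj (ψ i (δ u)) (ψ i (δ v)) := by
    intro i j u v h
    exact (HjAdj j _ _).mpr ((RAdj i j u v).mp h).2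
  -- the factors are C_b-factors
  have factor : ∀ (i : Fin n) (j : Fin m), IsCycleFactor (R (i, j)) b := by
    intro i j
    constructor
    · intro u
      have himg : (fun v => ψ i (δ v)) '' {v | (SimpleGraph.fromEdgeSet (R (i, j))).Adj u v}
          = {z | (SimpleGraph.fromEdgeSet (Q j)).Adj (ψ i (δ u)) z} := by
        ext z
        constructor
        · rintro ⟨v, hv, rfl⟩
          exact adj_to i j u v hv
        · intro hz
          obtain ⟨v, hv, hψv⟩ := lift i j u z hz
          exact ⟨v, hv, hψv⟩
      have hinj : Set.InjOn (fun v => ψ i (δ v))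
          {v | (SimpleGraph.fromEdgeSet (R (i, j))).Adj u v} := by
        intro v1 h1 v2 h2 he
        have r1 := adj_rep i j u v1 h1
        have r2 := adj_rep i j u v2 h2
        exact δ.injective (ψ_inj i (δ v1) (δ v2) (by rw [r1, r2]) he)
      have := Set.ncard_image_of_injOn hinj
      rw [himg] at this
      rw [← this]
      exact (hQ3 j).1 (ψ i (δ u))
    · intro u
      have back : ∀ z, (SimpleGraph.fromEdgeSet (Q j)).Reachable (ψ i (δ u)) z →
          ∃ v, (SimpleGraph.fromEdgeSet (R (i, j))).Reachable u v ∧ ψ i (δ v) = z := by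
        intro z hz
        rw [SimpleGraph.reachable_iff_reflTransGen] at hz
        induction hz with
        | refl => exact ⟨u, SimpleGraph.Reachable.refl u, rfl⟩
        | tail _ h2 ih =>
          obtain ⟨v, hv, hψ⟩ := ih
          rw [← hψ] at h2
          obtain ⟨v', hadj, hψ'⟩ := lift i j v _ h2
          exact ⟨v', hv.trans hadj.reachable, hψ'⟩
      have himg : (fun v => ψ i (δ v)) ''
          {v | (SimpleGraph.fromEdgeSet (R (i, j))).Reachable u v}
          = {z | (SimpleGraph.fromEdgeSet (Q j)).Reachable (ψ i (δ u)) z} := by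
        ext z
        constructor
        · rintro ⟨v, hv, rfl⟩
          show (SimpleGraph.fromEdgeSet (Q j)).Reachable _ _
          simp only [Set.mem_setOf_eq] at hv
          rw [SimpleGraph.reachable_iff_reflTransGen] at hv ⊢
          induction hv with
          | refl => exact Relation.ReflTransGen.refl
          | tail _ h2 ih => exact ih.tail ((HjAdj j _ _).mpr ((RAdj i j _ _).mp h2).2)
        · intro hz
          obtain ⟨v, hv, hψv⟩ := back z hz
          exact ⟨v, hv, hψv⟩
      have hinj : Set.InjOn (fun v => ψ i (δ v))
          {v | (SimpleGraph.fromEdgeSet (R (i, j))).Reachable u v} := by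
        intro v1 h1 v2 h2 he
        have r1 := reach_rep i j u v1 h1
        have r2 := reach_rep i j u v2 h2
        exact δ.injective (ψ_inj i (δ v1) (δ v2) (by rw [r1, r2]) he)
      have hcard := Set.ncard_image_of_injOn hinj
      rw [himg] at hcard
      rw [← hcard]
      exact (hQ3 j).2 (ψ i (δ u))
  -- the factors lie inside the big equipartite graph
  have R_sub : ∀ ij, R ij ⊆ (completeEquipartite (w * x) t).edgeSet := by
    rintro ⟨i, j⟩ e ⟨u, v, rfl, hm1, hm2⟩
    rw [SimpleGraph.mem_edgeSet]
    have hadj1 : (completeEquipartite x t).Adj (δ u).1 (δ v).1 :=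
      (SimpleGraph.mem_edgeSet _).mp (hP1 i hm1)
    rw [completeEquipartite, SimpleGraph.fromRel_adj] at hadj1
    have hne : u.1 ≠ v.1 := by
      rcases hadj1.2 with h | h
      · exact h
      · exact (Ne.symm h)
    rw [completeEquipartite, SimpleGraph.fromRel_adj]
    exact ⟨fun heq => hne (by rw [heq]), Or.inl hne⟩
  -- every edge lies in exactly one factor
  have cover : ∀ e ∈ (completeEquipartite (w * x) t).edgeSet,
      ∃! ij : Fin n × Fin m, e ∈ R ij := by
    intro e he
    induction e using Sym2.ind with
    | _ u v =>
      rw [SimpleGraph.mem_edgeSet, completeEquipartite, SimpleGraph.fromRel_adj] at he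
      have hne1 : u.1 ≠ v.1 := by
        rcases he.2 with h | h
        · exact h
        · exact Ne.symm h
      have hPmem : s((δ u).1, (δ v).1) ∈ (completeEquipartite x t).edgeSet := by
        rw [SimpleGraph.mem_edgeSet, completeEquipartite, SimpleGraph.fromRel_adj]
        refine ⟨fun heq => hne1 ?_, Or.inl hne1⟩
        have := congrArg Prod.fst heq
        exact this
      obtain ⟨i, hi, hiu⟩ := hP2 _ hPmem
      have hℓne : ℓ i (δ u).1 ≠ ℓ i (δ v).1 := by
        rcases (labels_consec i _ _ hi).1 with h | h
        · intro heq
          rw [heq] at h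
          exact one_ne_zero (α := ZMod a) (by linear_combination -h)
        · intro heq
          rw [heq] at h
          exact one_ne_zero (α := ZMod a) (by linear_combination h)
      have hQmem : s(ψ i (δ u), ψ i (δ v)) ∈ (cycleBlowup w a).edgeSet := by
        rw [SimpleGraph.mem_edgeSet, cycleBlowup, SimpleGraph.fromRel_adj]
        refine ⟨fun heq => hℓne (congrArg Prod.fst heq), ?_⟩
        rcases (labels_consec i _ _ hi).1 with h | h
        · right; exact h
        · left
          show ℓ i (δ u).1 = ℓ i (δ v).1 + 1
          rw [h]
          ring
      obtain ⟨j, hj, hju⟩ := hQ2 _ hQmem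
      refine ⟨(i, j), ⟨u, v, rfl, hi, hj⟩, ?_⟩
      rintro ⟨i', j'⟩ ⟨u', v', he', hm1, hm2⟩
      have hm1' : s((δ u).1, (δ v).1) ∈ P i' ∧ s(ψ i' (δ u), ψ i' (δ v)) ∈ Q j' := by
        rcases Sym2.eq_iff.mp he' with ⟨rfl, rfl⟩ | ⟨rfl, rfl⟩
        · exact ⟨hm1, hm2⟩
        · exact ⟨Sym2.eq_swap ▸ hm1, Sym2.eq_swap ▸ hm2⟩
      have hii : i' = i := hiu i' hm1'.1
      subst hii
      have hjj : j' = j := hju j' hm1'.2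
      subst hjj
      rfl
  -- assemble
  refine ⟨n * m, fun k => R (finProdFinEquiv.symm k), fun k => R_sub _, ?_, ?_⟩
  · intro e he
    obtain ⟨ij, hij, huniq⟩ := cover e he
    refine ⟨finProdFinEquiv ij, by simpa using hij, ?_⟩
    intro k hk
    have := huniq _ hk
    exact (Equiv.symm_apply_eq _).mp this
  · intro k
    exact factor (finProdFinEquiv.symm k).1 (finProdFinEquiv.symm k).2
end

section
/- For every integer x ≥ 4 with x ≡ 2 or 4 (mod 6), the graph C_{(6:x)} admits a C_{2x}-factorization. -/
/-!
Read `Fin 6` as `ZMod 6`. A voltage assignment `t : ZMod x → ZMod 6` gives the permutation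
`(u, k) ↦ (u + 1, k + t u)` of the vertices; its edges `{p, f p}` form a spanning 2-regular
subgraph of `C_(6:x)` whose components are the cycles of the permutation, and going once around
the base cycle shifts `k` by `∑ u, t u`, so every cycle has length `x · addOrderOf (∑ u, t u)`.

Factor `i` uses the voltage `(3 - x) i` on layer `0`, `3 - i` on layer `1` and `i` elsewhere. On
every layer `i ↦ tᵢ(u)` is an involution of `ZMod 6` (on layer `0` because `(3 - x)² = 1` exactly
when `x ≡ 2, 4 mod 6`), so every edge lies in exactly one factor; and the voltages of each factor
sum to `3`, which has order `2`, so all cycles have length `2x`.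
-/

open Function SimpleGraph

section PermEdgeSet

variable {V : Type*} (f : Equiv.Perm V)

def permEdgeSet : Set (Sym2 V) := Set.range fun a => s(a, f a)

variable {f}

lemma mem_permEdgeSet_iff {a b : V} : s(a, b) ∈ permEdgeSet f ↔ b = f a ∨ a = f b := by
  constructor
  · rintro ⟨c, hc⟩
    rcases Sym2.eq_iff.mp hc with ⟨rfl, rfl⟩ | ⟨rfl, rfl⟩
    exacts [.inl rfl, .inr rfl]
  · rintro (rfl | rfl)
    exacts [⟨a, rfl⟩, ⟨b, Sym2.eq_swap⟩]

lemma adj_fromEdgeSet_permEdgeSet_iff {a b : V} :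
    (fromEdgeSet (permEdgeSet f)).Adj a b ↔ (b = f a ∨ a = f b) ∧ a ≠ b := by
  rw [fromEdgeSet_adj, mem_permEdgeSet_iff]

lemma adj_fromEdgeSet_permEdgeSet_apply (hf : ∀ a, f a ≠ a) (a : V) :
    (fromEdgeSet (permEdgeSet f)).Adj a (f a) :=
  adj_fromEdgeSet_permEdgeSet_iff.mpr ⟨.inl rfl, (hf a).symm⟩

lemma neighborSet_fromEdgeSet_permEdgeSet (hf : ∀ a, f a ≠ a) (a : V) :
    {b | (fromEdgeSet (permEdgeSet f)).Adj a b} = {f a, f.symm a} := by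
  ext b
  simp only [Set.mem_ofPred_eq, Set.mem_insert_iff, Set.mem_singleton_iff, Equiv.eq_symm_apply]
  constructor
  · intro hab
    rcases (adj_fromEdgeSet_permEdgeSet_iff.mp hab).1 with h | h
    exacts [.inl h, .inr h.symm]
  · rintro (rfl | h)
    · exact adj_fromEdgeSet_permEdgeSet_apply hf a
    · exact (h ▸ adj_fromEdgeSet_permEdgeSet_apply hf b).symm

lemma reachable_fromEdgeSet_permEdgeSet_iff [Finite V] (hf : ∀ a, f a ≠ a) {a b : V} :
    (fromEdgeSet (permEdgeSet f)).Reachable a b ↔ f.SameCycle a b := by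
  constructor
  · rintro ⟨w⟩
    induction w with
    | nil => exact .rfl
    | cons hadj _ ih =>
      rcases (adj_fromEdgeSet_permEdgeSet_iff.mp hadj).1 with rfl | rfl
      exacts [Equiv.Perm.sameCycle_apply_left.mp ih, Equiv.Perm.sameCycle_apply_left.mpr ih]
  · intro h
    obtain ⟨n, -, rfl⟩ := h.exists_nat_pow_eq
    clear h
    induction n with
    | zero => rfl
    | succ n ih =>
      rw [pow_succ', Equiv.Perm.mul_apply]
      exact ih.trans (adj_fromEdgeSet_permEdgeSet_apply hf _).reachable

lemma ncard_setOf_sameCycle [Finite V] (a : V) :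
    {b | f.SameCycle a b}.ncard = minimalPeriod f a := by
  have hset : {b | f.SameCycle a b} = MulAction.orbit (Subgroup.zpowers f) a := by
    ext b
    simp only [Set.mem_ofPred_eq, Equiv.Perm.SameCycle, MulAction.mem_orbit_iff, Subtype.exists,
      Subgroup.mk_smul, Equiv.Perm.smul_def, exists_prop, Subgroup.exists_mem_zpowers]
  classical
  have := Fintype.ofFinite V
  rw [hset, ← Nat.card_coe_set_eq, Nat.card_eq_fintype_card, ← MulAction.minimalPeriod_eq_card]
  rfl

theorem isCycleFactor_permEdgeSet [Finite V] {m : ℕ} (hf : ∀ a, f (f a) ≠ a)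
    (hm : ∀ a, minimalPeriod f a = m) : IsCycleFactor (permEdgeSet f) m := by
  have hfix : ∀ a, f a ≠ a := fun a h => hf a (by rw [h, h])
  refine ⟨fun a => ?_, fun a => ?_⟩
  · rw [neighborSet_fromEdgeSet_permEdgeSet hfix, Set.ncard_pair]
    exact fun h => hf a (f.eq_symm_apply.mp h)
  · simp_rw [reachable_fromEdgeSet_permEdgeSet_iff hfix]
    rw [ncard_setOf_sameCycle, hm]

end PermEdgeSet

section VoltageStep

variable {A : Type*} [AddCommGroup A] {x : ℕ}

def voltageStep (t : ZMod x → A) : Equiv.Perm (ZMod x × A) where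
  toFun p := (p.1 + 1, p.2 + t p.1)
  invFun p := (p.1 - 1, p.2 - t (p.1 - 1))
  left_inv p := by simp
  right_inv p := by simp

@[simp]
lemma voltageStep_apply (t : ZMod x → A) (p : ZMod x × A) :
    voltageStep t p = (p.1 + 1, p.2 + t p.1) := rfl

lemma voltageStep_iterate (t : ZMod x → A) (n : ℕ) (p : ZMod x × A) :
    (voltageStep t)^[n] p = (p.1 + n, p.2 + ∑ j ∈ Finset.range n, t (p.1 + j)) := by
  induction n with
  | zero => simp
  | succ n ih =>
    rw [iterate_succ_apply', ih, voltageStep_apply, Finset.sum_range_succ]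
    push_cast
    simp only [add_assoc]

lemma sum_range_add_natCast [NeZero x] (t : ZMod x → A) (u : ZMod x) :
    ∑ j ∈ Finset.range x, t (u + j) = ∑ v, t v := by
  rw [Finset.sum_range]
  refine Fintype.sum_bijective _ ?_ _ _ fun _ => rfl
  rw [Fintype.bijective_iff_injective_and_card, ZMod.card, Fintype.card_fin]
  refine ⟨fun i j h => Fin.ext ?_, rfl⟩
  have := congrArg ZMod.val (add_left_cancel h)
  rwa [ZMod.val_cast_of_lt i.2, ZMod.val_cast_of_lt j.2] at this

lemma voltageStep_iterate_self [NeZero x] (t : ZMod x → A) (p : ZMod x × A) :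
    (voltageStep t)^[x] p = (p.1, p.2 + ∑ v, t v) := by
  rw [voltageStep_iterate, sum_range_add_natCast, ZMod.natCast_self, add_zero]

lemma voltageStep_iterate_mul_self [NeZero x] (t : ZMod x → A) (m : ℕ) (p : ZMod x × A) :
    (voltageStep t)^[x * m] p = (p.1, p.2 + m • ∑ v, t v) := by
  induction m generalizing p with
  | zero => simp
  | succ m ih =>
    rw [Nat.mul_succ, iterate_add_apply, voltageStep_iterate_self, ih, add_assoc, ← succ_nsmul']

lemma isPeriodicPt_voltageStep_iff [NeZero x] (t : ZMod x → A) (n : ℕ) (p : ZMod x × A) :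
    IsPeriodicPt (voltageStep t) n p ↔ x * addOrderOf (∑ v, t v) ∣ n := by
  constructor
  · intro h
    obtain ⟨m, rfl⟩ : x ∣ n := by
      rw [← ZMod.natCast_eq_zero_iff, ← add_eq_left (a := p.1)]
      exact congrArg Prod.fst ((voltageStep_iterate t n p).symm.trans h)
    rw [IsPeriodicPt, IsFixedPt, voltageStep_iterate_mul_self, Prod.ext_iff] at h
    rw [Nat.mul_dvd_mul_iff_left (NeZero.pos x), addOrderOf_dvd_iff_nsmul_eq_zero]
    simpa using h.2
  · rintro ⟨k, rfl⟩
    rw [IsPeriodicPt, IsFixedPt, mul_assoc, voltageStep_iterate_mul_self, mul_nsmul,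
      addOrderOf_nsmul_eq_zero, smul_zero, add_zero]

theorem minimalPeriod_voltageStep [NeZero x] (t : ZMod x → A) (p : ZMod x × A) :
    minimalPeriod (voltageStep t) p = x * addOrderOf (∑ v, t v) :=
  Nat.dvd_antisymm ((isPeriodicPt_voltageStep_iff t _ p).2 dvd_rfl).minimalPeriod_dvd
    ((isPeriodicPt_voltageStep_iff t _ p).1 (isPeriodicPt_minimalPeriod _ p))

lemma voltageStep_ne (h2 : (2 : ZMod x) ≠ 0) (t : ZMod x → A) (p : ZMod x × A) :
    voltageStep t p ≠ p := by
  intro h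
  have h1 : p.1 + 1 = p.1 := congrArg Prod.fst h
  exact h2 (by linear_combination 2 * h1)

lemma voltageStep_voltageStep_ne (h2 : (2 : ZMod x) ≠ 0) (t : ZMod x → A) (p : ZMod x × A) :
    voltageStep t (voltageStep t p) ≠ p := by
  intro h
  have h1 : p.1 + 1 + 1 = p.1 := congrArg Prod.fst h
  exact h2 (by linear_combination h1)

lemma mem_permEdgeSet_voltageStep_iff (h2 : (2 : ZMod x) ≠ 0) (t : ZMod x → A)
    {p q : ZMod x × A} (hpq : q.1 = p.1 + 1) :
    s(p, q) ∈ permEdgeSet (voltageStep t) ↔ q.2 = p.2 + t p.1 := by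
  rw [mem_permEdgeSet_iff, voltageStep_apply, voltageStep_apply, Prod.ext_iff, Prod.ext_iff, hpq]
  refine ⟨?_, fun h => .inl ⟨rfl, h⟩⟩
  rintro (⟨-, h⟩ | ⟨h, -⟩)
  · exact h
  · exact absurd (by linear_combination -h) h2

end VoltageStep

theorem hasCycleFactorization_of_voltages {A : Type*} [AddCommGroup A] [Finite A] {x : ℕ}
    [NeZero x] {n m : ℕ} (t : Fin n → ZMod x → A) (h2 : (2 : ZMod x) ≠ 0)
    (ht : ∀ u, Bijective fun i => t i u) (hm : ∀ i, x * addOrderOf (∑ v, t i v) = m) :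
    HasCycleFactorization (fromRel fun p q : ZMod x × A => p.1 = q.1 + 1) m := by
  have unique_factor (p q : ZMod x × A) (hpq : q.1 = p.1 + 1) :
      ∃! i, s(p, q) ∈ permEdgeSet (voltageStep (t i)) := by
    simp only [mem_permEdgeSet_voltageStep_iff h2 _ hpq, eq_comm (a := q.2), ← eq_sub_iff_add_eq']
    exact (ht p.1).existsUnique (q.2 - p.2)
  refine ⟨n, fun i => permEdgeSet (voltageStep (t i)), fun i => ?_, fun e he => ?_, fun i => ?_⟩
  · rintro _ ⟨p, rfl⟩
    exact ⟨(voltageStep_ne h2 _ p).symm, .inr rfl⟩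
  · induction e using Sym2.ind with | h p q => ?_
    rcases ((mem_edgeSet _).mp he).2 with hpq | hpq
    · simpa only [Sym2.eq_swap] using unique_factor q p hpq
    · exact unique_factor p q hpq
  · exact isCycleFactor_permEdgeSet (voltageStep_voltageStep_ne h2 _)
      fun p => (minimalPeriod_voltageStep _ p).trans (hm i)

section SixVoltage

variable {x : ℕ}

def sixVoltage (x : ℕ) (i : ZMod 6) (u : ZMod x) : ZMod 6 :=
  if u = 0 then (3 - x) * i else if u = 1 then 3 - i else i

lemma three_sub_natCast_mul_self (hmod : x % 6 = 2 ∨ x % 6 = 4) :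
    (3 - (x : ZMod 6)) * (3 - x) = 1 := by
  rw [← ZMod.natCast_mod]
  rcases hmod with h | h <;> rw [h] <;> decide

lemma sixVoltage_involutive (hmod : x % 6 = 2 ∨ x % 6 = 4) (u : ZMod x) :
    Involutive fun i => sixVoltage x i u := by
  intro i
  simp only [sixVoltage]
  split_ifs
  · rw [← mul_assoc, three_sub_natCast_mul_self hmod, one_mul]
  · ring
  · rfl

lemma sum_sixVoltage [NeZero x] [Nontrivial (ZMod x)] (i : ZMod 6) :
    ∑ u, sixVoltage x i u = 3 := by
  have split (u : ZMod x) : sixVoltage x i u =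
      i + (if u = 0 then (2 - x) * i else 0) + (if u = 1 then 3 - 2 * i else 0) := by
    unfold sixVoltage
    split_ifs with h0 h1 h1
    · exact absurd (h0.symm.trans h1) zero_ne_one
    all_goals ring
  simp only [split, Finset.sum_add_distrib, Finset.sum_const, Finset.card_univ, ZMod.card,
    Finset.sum_ite_eq', Finset.mem_univ, if_true, nsmul_eq_mul]
  ring

lemma addOrderOf_three_zmod_six : addOrderOf (3 : ZMod 6) = 2 :=
  addOrderOf_eq_prime (by decide) (by decide)

end SixVoltage

theorem cycleBlowup_six_factorization (x : ℕ) (hx : 4 ≤ x)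
    (hmod : x % 6 = 2 ∨ x % 6 = 4) :
    HasCycleFactorization (cycleBlowup 6 x) (2 * x) := by
  have : NeZero x := ⟨by omega⟩
  have : Fact (1 < x) := ⟨by omega⟩
  have h2 : (2 : ZMod x) ≠ 0 := by
    rw [← Nat.cast_two, Ne, ZMod.natCast_eq_zero_iff]
    exact Nat.not_dvd_of_pos_of_lt two_pos (by omega)
  have period (i : ZMod 6) : x * addOrderOf (∑ u, sixVoltage x i u) = 2 * x := by
    rw [sum_sixVoltage, addOrderOf_three_zmod_six, mul_comm]
  exact hasCycleFactorization_of_voltages (A := ZMod 6) (sixVoltage x) h2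
    (fun u => (sixVoltage_involutive hmod u).bijective) period
end

section
/- Let n ≥ 9 and let X be a cycle of length n with vertex sequence v_0, v_1, …, v_{n−1} (indices modulo n). Let j, k be integers with 3 ≤ j, j + 3 ≤ k ≤ n − 3, and set a = v_0, b = v_1, c = v_j, d = v_{j+1}, e = v_k, f = v_{k+1}, so that {a,b}, {c,d}, {e,f} are three pairwise vertex-disjoint edges of X and {b,c}, {d,e}, {f,a} are not edges of X. Then the graph on {v_0, …, v_{n−1}} whose edge set is the symmetric difference of E(X) with the edge set {{a,b}, {b,c}, {c,d}, {d,e}, {e,f}, {f,a}} of the six-cycle (a, b, c, d, e, f) is a 2-regular graph with exactly three connected components, which are vertex-disjoint cycles of lengths j, k − j, and n − k covering all n vertices. -/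
/-- successor in the modified graph, at ℕ level -/
def sN (n j k m : ℕ) : ℕ :=
  if m = 0 then k+1 else if m = j then 1 else if m = k then j+1
  else if m+1 = n then 0 else m+1

/-- predecessor in the modified graph, at ℕ level -/
def tN (n j k m : ℕ) : ℕ :=
  if m = 1 then j else if m = j+1 then k else if m = k+1 then 0
  else if m = 0 then n-1 else m-1

/-- old-cycle adjacency at ℕ level -/
def OldP (n m₁ m₂ : ℕ) : Prop :=
  (m₂ = m₁+1 ∨ (m₁+1 = n ∧ m₂ = 0)) ∨ (m₁ = m₂+1 ∨ (m₂+1 = n ∧ m₁ = 0))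

/-- six-cycle adjacency at ℕ level -/
def SixP (j k m₁ m₂ : ℕ) : Prop :=
  ((m₁=0∧m₂=1)∨(m₁=1∧m₂=0)) ∨ ((m₁=1∧m₂=j)∨(m₁=j∧m₂=1)) ∨ ((m₁=j∧m₂=j+1)∨(m₁=j+1∧m₂=j))
  ∨ ((m₁=j+1∧m₂=k)∨(m₁=k∧m₂=j+1)) ∨ ((m₁=k∧m₂=k+1)∨(m₁=k+1∧m₂=k))
  ∨ ((m₁=k+1∧m₂=0)∨(m₁=0∧m₂=k+1))

/-- new adjacency at ℕ level -/
def AP (n j k m₁ m₂ : ℕ) : Prop :=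
  (OldP n m₁ m₂ ∧ ¬ SixP j k m₁ m₂) ∨ (SixP j k m₁ m₂ ∧ ¬ OldP n m₁ m₂)

set_option maxHeartbeats 1000000 in
lemma AP_iff {n j k : ℕ} (hn : 9 ≤ n) (hj : 3 ≤ j) (hjk : j + 3 ≤ k) (hk : k ≤ n - 3)
    {m₁ m₂ : ℕ} (h₁ : m₁ < n) (h₂ : m₂ < n) :
    AP n j k m₁ m₂ ↔ (m₂ = sN n j k m₁ ∨ m₂ = tN n j k m₁) := by
  constructor
  · rintro (⟨ho, hs⟩ | ⟨hs, ho⟩)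
    · have n1 : ¬(m₁=0∧m₂=1) := fun h => hs (Or.inl (Or.inl h))
      have n2 : ¬(m₁=1∧m₂=0) := fun h => hs (Or.inl (Or.inr h))
      have n5 : ¬(m₁=j∧m₂=j+1) := fun h => hs (Or.inr (Or.inr (Or.inl (Or.inl h))))
      have n6 : ¬(m₁=j+1∧m₂=j) := fun h => hs (Or.inr (Or.inr (Or.inl (Or.inr h))))
      have n9 : ¬(m₁=k∧m₂=k+1) :=
        fun h => hs (Or.inr (Or.inr (Or.inr (Or.inr (Or.inl (Or.inl h))))))
      have n10 : ¬(m₁=k+1∧m₂=k) :=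
        fun h => hs (Or.inr (Or.inr (Or.inr (Or.inr (Or.inl (Or.inr h))))))
      clear hs
      rcases ho with (h | h) | (h | h) <;> (unfold sN tN; split_ifs <;> omega)
    · have n1 : ¬(m₂ = m₁+1) := fun h => ho (Or.inl (Or.inl h))
      have n2 : ¬(m₁+1 = n ∧ m₂ = 0) := fun h => ho (Or.inl (Or.inr h))
      have n3 : ¬(m₁ = m₂+1) := fun h => ho (Or.inr (Or.inl h))
      have n4 : ¬(m₂+1 = n ∧ m₁ = 0) := fun h => ho (Or.inr (Or.inr h))
      clear ho
      rcases hs with (⟨e1,e2⟩|⟨e1,e2⟩)|((⟨e1,e2⟩|⟨e1,e2⟩)|((⟨e1,e2⟩|⟨e1,e2⟩)|((⟨e1,e2⟩|⟨e1,e2⟩)|((⟨e1,e2⟩|⟨e1,e2⟩)|(⟨e1,e2⟩|⟨e1,e2⟩))))) <;>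
        (unfold sN tN; split_ifs <;> omega)
  · rintro (rfl | rfl)
    · unfold AP
      unfold sN
      split_ifs with h1 h2 h3 h4
      · refine Or.inr ⟨Or.inr (Or.inr (Or.inr (Or.inr (Or.inr (Or.inr ⟨h1, rfl⟩))))),
          fun hc => ?_⟩
        unfold OldP at hc; omega
      · refine Or.inr ⟨Or.inr (Or.inl (Or.inr ⟨h2, rfl⟩)), fun hc => ?_⟩
        unfold OldP at hc; omega
      · refine Or.inr ⟨Or.inr (Or.inr (Or.inr (Or.inl (Or.inr ⟨h3, rfl⟩)))), fun hc => ?_⟩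
        unfold OldP at hc; omega
      · refine Or.inl ⟨Or.inl (Or.inr ⟨h4, rfl⟩), fun hc => ?_⟩
        unfold SixP at hc; omega
      · refine Or.inl ⟨Or.inl (Or.inl rfl), fun hc => ?_⟩
        unfold SixP at hc; omega
    · unfold AP
      unfold tN
      split_ifs with h1 h2 h3 h4
      · refine Or.inr ⟨Or.inr (Or.inl (Or.inl ⟨h1, rfl⟩)), fun hc => ?_⟩
        unfold OldP at hc; omega
      · refine Or.inr ⟨Or.inr (Or.inr (Or.inr (Or.inl (Or.inl ⟨h2, rfl⟩)))), fun hc => ?_⟩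
        unfold OldP at hc; omega
      · refine Or.inr ⟨Or.inr (Or.inr (Or.inr (Or.inr (Or.inr (Or.inl ⟨h3, rfl⟩))))),
          fun hc => ?_⟩
        unfold OldP at hc; omega
      · refine Or.inl ⟨Or.inr (Or.inr ⟨by omega, h4⟩), fun hc => ?_⟩
        unfold SixP at hc; omega
      · refine Or.inl ⟨Or.inr (Or.inl (by omega)), fun hc => ?_⟩
        unfold SixP at hc; omega

lemma AP_ne {n j k : ℕ} (hn : 9 ≤ n) (hj : 3 ≤ j) (hjk : j + 3 ≤ k) (hk : k ≤ n - 3)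
    {m₁ m₂ : ℕ} (h : AP n j k m₁ m₂) : m₁ ≠ m₂ := by
  rcases h with ⟨ho, -⟩ | ⟨hs, -⟩
  · unfold OldP at ho; omega
  · unfold SixP at hs; omega

lemma sN_lt {n j k : ℕ} (hn : 9 ≤ n) (hj : 3 ≤ j) (hjk : j + 3 ≤ k) (hk : k ≤ n - 3)
    {m : ℕ} (h : m < n) : sN n j k m < n := by unfold sN; split_ifs <;> omega

lemma tN_lt {n j k : ℕ} (hn : 9 ≤ n) (hj : 3 ≤ j) (hjk : j + 3 ≤ k) (hk : k ≤ n - 3)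
    {m : ℕ} (h : m < n) : tN n j k m < n := by unfold tN; split_ifs <;> omega

lemma sN_ne_tN {n j k : ℕ} (hn : 9 ≤ n) (hj : 3 ≤ j) (hjk : j + 3 ≤ k) (hk : k ≤ n - 3)
    {m : ℕ} (h : m < n) : sN n j k m ≠ tN n j k m := by unfold sN tN; split_ifs <;> omega

lemma castInj {n : ℕ} [NeZero n] {s t : ℕ} (hs : s < n) (ht : t < n) :
    ((s : ZMod n) = (t : ZMod n)) ↔ s = t := by
  constructor
  · intro h
    have := congrArg ZMod.val h
    rwa [ZMod.val_cast_of_lt hs, ZMod.val_cast_of_lt ht] at this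
  · rintro rfl; rfl

lemma cast_succ {n : ℕ} [NeZero n] {s t : ℕ} (hs : s < n) (ht : t < n) :
    ((t : ZMod n) = (s : ZMod n) + 1) ↔ (t = s + 1 ∨ (s + 1 = n ∧ t = 0)) := by
  have h1 : ((s : ZMod n) + 1) = ((s + 1 : ℕ) : ZMod n) := by push_cast; ring
  rw [h1]
  rcases Nat.lt_or_ge (s+1) n with h | h
  · rw [castInj ht h]; omega
  · have hs1 : s + 1 = n := by omega
    rw [hs1, ZMod.natCast_self]
    have h0 : (0 : ZMod n) = ((0:ℕ) : ZMod n) := by norm_num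
    rw [h0, castInj ht (by omega)]
    omega

lemma reach_mem {V : Type*} {G : SimpleGraph V} {T : Set V}
    (hT : ∀ x ∈ T, ∀ y, G.Adj x y → y ∈ T) :
    ∀ {x y : V}, G.Reachable x y → x ∈ T → y ∈ T := by
  intro x y h
  obtain ⟨p⟩ := h
  induction p with
  | nil => exact id
  | cons hadj p ih => exact fun hx => ih (hT _ hx _ hadj)

/-- The edge set of the cycle with vertex sequence `v 0, v 1, …, v (n-1)`
(indices modulo `n`). -/
def cycleEdges {V : Type*} (n : ℕ) (v : ZMod n → V) : Set (Sym2 V) :=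
  {e | ∃ i : ZMod n, e = s(v i, v (i + 1))}

lemma mem_cycleEdges_iff {V : Type*} {n : ℕ} (v : ZMod n → V) (hv : Function.Injective v)
    (p q : ZMod n) :
    s(v p, v q) ∈ cycleEdges n v ↔ (q = p + 1 ∨ p = q + 1) := by
  simp only [cycleEdges, Set.mem_setOf_eq, Sym2.eq_iff]
  constructor
  · rintro ⟨i, (⟨h1, h2⟩ | ⟨h1, h2⟩)⟩
    · obtain rfl := hv h1
      exact Or.inl (hv h2)
    · obtain rfl := hv h2
      exact Or.inr (hv h1)
  · rintro (h | h)
    · exact ⟨p, Or.inl ⟨rfl, by rw [h]⟩⟩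
    · exact ⟨q, Or.inr ⟨by rw [h], rfl⟩⟩

theorem six_cycle_switch_three_cycles {V : Type*} (n : ℕ) (hn : 9 ≤ n)
    (v : ZMod n → V) (hv : Function.Injective v)
    (j k : ℕ) (hj : 3 ≤ j) (hjk : j + 3 ≤ k) (hk : k ≤ n - 3)
    (a b c d e f : V)
    (ha : a = v 0) (hb : b = v 1) (hc : c = v (j : ZMod n))
    (hd : d = v ((j + 1 : ℕ) : ZMod n)) (he : e = v (k : ZMod n))
    (hf : f = v ((k + 1 : ℕ) : ZMod n))
    (E' : Set (Sym2 V))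
    (hE' : E' = symmDiff (cycleEdges n v)
      {s(a, b), s(b, c), s(c, d), s(d, e), s(e, f), s(f, a)})
    (S₁ S₂ S₃ : Set V)
    (hS₁ : S₁ = {w | (SimpleGraph.fromEdgeSet E').Reachable b w})
    (hS₂ : S₂ = {w | (SimpleGraph.fromEdgeSet E').Reachable d w})
    (hS₃ : S₃ = {w | (SimpleGraph.fromEdgeSet E').Reachable f w}) :
    (∀ i : ZMod n, {w | (SimpleGraph.fromEdgeSet E').Adj (v i) w}.ncard = 2) ∧
    S₁.ncard = j ∧ S₂.ncard = k - j ∧ S₃.ncard = n - k ∧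
    Disjoint S₁ S₂ ∧ Disjoint S₁ S₃ ∧ Disjoint S₂ S₃ ∧
    S₁ ∪ S₂ ∪ S₃ = Set.range v := by
  haveI : NeZero n := ⟨by omega⟩
  subst ha hb hc hd he hf
  -- membership of the six-cycle edge set, at ℕ level
  have hSix : ∀ m₁ m₂ : ℕ, m₁ < n → m₂ < n →
      (s(v (m₁ : ZMod n), v (m₂ : ZMod n)) ∈
        ({s(v 0, v 1), s(v 1, v (j : ZMod n)), s(v (j : ZMod n), v ((j + 1 : ℕ) : ZMod n)),
          s(v ((j + 1 : ℕ) : ZMod n), v (k : ZMod n)), s(v (k : ZMod n), v ((k + 1 : ℕ) : ZMod n)),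
          s(v ((k + 1 : ℕ) : ZMod n), v 0)} : Set (Sym2 V)) ↔ SixP j k m₁ m₂) := by
    intro m₁ m₂ h₁ h₂
    have e0 : (0 : ZMod n) = ((0:ℕ) : ZMod n) := by norm_num
    have e1 : (1 : ZMod n) = ((1:ℕ) : ZMod n) := by norm_num
    rw [e0, e1]
    simp only [Set.mem_insert_iff, Set.mem_singleton_iff, Sym2.eq_iff, hv.eq_iff,
      castInj h₁ h₂, castInj h₂ h₁,
      castInj h₁ (show (0:ℕ) < n by omega), castInj h₂ (show (0:ℕ) < n by omega),
      castInj h₁ (show (1:ℕ) < n by omega), castInj h₂ (show (1:ℕ) < n by omega),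
      castInj h₁ (show j < n by omega), castInj h₂ (show j < n by omega),
      castInj h₁ (show j+1 < n by omega), castInj h₂ (show j+1 < n by omega),
      castInj h₁ (show k < n by omega), castInj h₂ (show k < n by omega),
      castInj h₁ (show k+1 < n by omega), castInj h₂ (show k+1 < n by omega),
      SixP]
  have hOld : ∀ m₁ m₂ : ℕ, m₁ < n → m₂ < n →
      (s(v (m₁ : ZMod n), v (m₂ : ZMod n)) ∈ cycleEdges n v ↔ OldP n m₁ m₂) := by
    intro m₁ m₂ h₁ h₂
    rw [mem_cycleEdges_iff v hv, cast_succ h₁ h₂, cast_succ h₂ h₁]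
    unfold OldP
    tauto
  -- the key adjacency characterization
  have adj : ∀ m₁ m₂ : ℕ, m₁ < n → m₂ < n →
      ((SimpleGraph.fromEdgeSet E').Adj (v (m₁ : ZMod n)) (v (m₂ : ZMod n)) ↔
        AP n j k m₁ m₂) := by
    intro m₁ m₂ h₁ h₂
    rw [SimpleGraph.fromEdgeSet_adj, hE', Set.mem_symmDiff, hOld m₁ m₂ h₁ h₂,
      hSix m₁ m₂ h₁ h₂]
    unfold AP
    constructor
    · rintro ⟨h, -⟩; exact h
    · intro h
      refine ⟨h, fun hvv => ?_⟩
      exact AP_ne hn hj hjk hk h ((castInj h₁ h₂).mp (hv hvv))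
  -- edges only touch the range of v
  have mem_range : ∀ x y : V, s(x, y) ∈ E' → y ∈ Set.range v := by
    intro x y h
    rw [hE'] at h
    rcases Set.mem_symmDiff.mp h with ⟨h, -⟩ | ⟨h, -⟩
    · obtain ⟨i, hi⟩ := h
      rcases Sym2.eq_iff.mp hi with ⟨-, h2⟩ | ⟨-, h2⟩ <;> exact ⟨_, h2.symm⟩
    · simp only [Set.mem_insert_iff, Set.mem_singleton_iff] at h
      rcases h with h|h|h|h|h|h <;> rcases Sym2.eq_iff.mp h with ⟨-, h2⟩ | ⟨-, h2⟩ <;>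
        exact ⟨_, h2.symm⟩
  -- neighbourhoods
  have nbhd : ∀ m : ℕ, m < n →
      {w | (SimpleGraph.fromEdgeSet E').Adj (v (m : ZMod n)) w} =
        {v ((sN n j k m : ℕ) : ZMod n), v ((tN n j k m : ℕ) : ZMod n)} := by
    intro m hm
    ext w
    simp only [Set.mem_setOf_eq, Set.mem_insert_iff, Set.mem_singleton_iff]
    constructor
    · intro hadj
      obtain ⟨q, rfl⟩ := mem_range _ _ ((SimpleGraph.fromEdgeSet_adj _).mp hadj).1
      have hqv : ((q.val : ℕ) : ZMod n) = q := ZMod.natCast_rightInverse q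
      have hadj' : (SimpleGraph.fromEdgeSet E').Adj (v (m : ZMod n)) (v ((q.val : ℕ) : ZMod n)) := by
        rw [hqv]; exact hadj
      rcases (AP_iff hn hj hjk hk hm (ZMod.val_lt q)).mp
          ((adj m q.val hm (ZMod.val_lt q)).mp hadj') with h | h
      · left; rw [← hqv, h]
      · right; rw [← hqv, h]
    · rintro (rfl | rfl)
      · exact (adj m _ hm (sN_lt hn hj hjk hk hm)).mpr
          ((AP_iff hn hj hjk hk hm (sN_lt hn hj hjk hk hm)).mpr (Or.inl rfl))
      · exact (adj m _ hm (tN_lt hn hj hjk hk hm)).mpr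
          ((AP_iff hn hj hjk hk hm (tN_lt hn hj hjk hk hm)).mpr (Or.inr rfl))
  -- chains of reachability
  have chain : ∀ r s : ℕ, r ≤ s → s < n →
      (∀ m, r ≤ m → m < s → AP n j k m (m+1)) →
      (SimpleGraph.fromEdgeSet E').Reachable (v (r : ZMod n)) (v (s : ZMod n)) := by
    intro r s hrs
    induction s, hrs using Nat.le_induction with
    | base => intro _ _; exact SimpleGraph.Reachable.refl _
    | succ s hs ih =>
      intro hsn hA
      have h1 : (SimpleGraph.fromEdgeSet E').Reachable (v (r : ZMod n)) (v (s : ZMod n)) :=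
        ih (by omega) (fun m hm1 hm2 => hA m hm1 (by omega))
      have h2 : (SimpleGraph.fromEdgeSet E').Adj (v (s : ZMod n)) (v ((s+1 : ℕ) : ZMod n)) :=
        (adj s (s+1) (by omega) hsn).mpr (hA s hs (by omega))
      exact h1.trans h2.reachable
  -- generic description of a connected component
  have comp_eq : ∀ (I : Set ℕ) (r : ℕ), r ∈ I → (∀ m ∈ I, m < n) →
      (∀ m ∈ I, sN n j k m ∈ I ∧ tN n j k m ∈ I) →
      (∀ m ∈ I, (SimpleGraph.fromEdgeSet E').Reachable (v (r : ZMod n)) (v (m : ZMod n))) →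
      {w | (SimpleGraph.fromEdgeSet E').Reachable (v (r : ZMod n)) w} =
        (fun m : ℕ => v (m : ZMod n)) '' I := by
    intro I r hr hIn hcl hre
    ext w
    constructor
    · intro h
      refine reach_mem ?_ h ⟨r, hr, rfl⟩
      rintro x ⟨m, hm, rfl⟩ y hxy
      obtain ⟨q, rfl⟩ := mem_range _ _ ((SimpleGraph.fromEdgeSet_adj _).mp hxy).1
      have hqv : ((q.val : ℕ) : ZMod n) = q := ZMod.natCast_rightInverse q
      have hxy' : (SimpleGraph.fromEdgeSet E').Adj (v (m : ZMod n)) (v ((q.val : ℕ) : ZMod n)) := by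
        rw [hqv]; exact hxy
      rcases (AP_iff hn hj hjk hk (hIn m hm) (ZMod.val_lt q)).mp
          ((adj m q.val (hIn m hm) (ZMod.val_lt q)).mp hxy') with h' | h'
      · exact ⟨q.val, by rw [h']; exact (hcl m hm).1, congrArg v hqv⟩
      · exact ⟨q.val, by rw [h']; exact (hcl m hm).2, congrArg v hqv⟩
    · rintro ⟨m, hm, rfl⟩
      exact hre m hm
  -- the three components
  have e1Z : (1 : ZMod n) = ((1:ℕ) : ZMod n) := by norm_num
  have hcomp₁ : {w | (SimpleGraph.fromEdgeSet E').Reachable (v 1) w} =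
      (fun m : ℕ => v (m : ZMod n)) '' Set.Icc 1 j := by
    rw [e1Z]
    refine comp_eq _ 1 ⟨le_refl 1, by omega⟩ (fun m hm => ?_) (fun m hm => ?_) (fun m hm => ?_)
    · simp only [Set.mem_Icc] at hm; omega
    · simp only [Set.mem_Icc] at hm ⊢
      unfold sN tN; split_ifs <;> omega
    · simp only [Set.mem_Icc] at hm
      refine chain 1 m hm.1 (by omega) (fun m' h1 h2 => ?_)
      rw [AP_iff hn hj hjk hk (by omega) (by omega)]
      left; unfold sN; split_ifs <;> omega
  have hcomp₂ : {w | (SimpleGraph.fromEdgeSet E').Reachable (v ((j+1 : ℕ) : ZMod n)) w} =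
      (fun m : ℕ => v (m : ZMod n)) '' Set.Icc (j+1) k := by
    refine comp_eq _ (j+1) ⟨le_refl _, by omega⟩ (fun m hm => ?_) (fun m hm => ?_) (fun m hm => ?_)
    · simp only [Set.mem_Icc] at hm; omega
    · simp only [Set.mem_Icc] at hm ⊢
      unfold sN tN; split_ifs <;> omega
    · simp only [Set.mem_Icc] at hm
      refine chain (j+1) m hm.1 (by omega) (fun m' h1 h2 => ?_)
      rw [AP_iff hn hj hjk hk (by omega) (by omega)]
      left; unfold sN; split_ifs <;> omega
  have hcomp₃ : {w | (SimpleGraph.fromEdgeSet E').Reachable (v ((k+1 : ℕ) : ZMod n)) w} =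
      (fun m : ℕ => v (m : ZMod n)) '' insert 0 (Set.Icc (k+1) (n-1)) := by
    refine comp_eq _ (k+1) (Set.mem_insert_iff.mpr (Or.inr ⟨le_refl _, by omega⟩))
      (fun m hm => ?_) (fun m hm => ?_) (fun m hm => ?_)
    · simp only [Set.mem_insert_iff, Set.mem_Icc] at hm; omega
    · simp only [Set.mem_insert_iff, Set.mem_Icc] at hm ⊢
      unfold sN tN; split_ifs <;> omega
    · simp only [Set.mem_insert_iff, Set.mem_Icc] at hm
      rcases hm with rfl | hm
      · have hadj : (SimpleGraph.fromEdgeSet E').Adj (v ((k+1 : ℕ) : ZMod n)) (v ((0 : ℕ) : ZMod n)) := by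
          rw [adj (k+1) 0 (by omega) (by omega), AP_iff hn hj hjk hk (by omega) (by omega)]
          right; unfold tN; split_ifs <;> omega
        exact hadj.reachable
      · refine chain (k+1) m hm.1 (by omega) (fun m' h1 h2 => ?_)
        rw [AP_iff hn hj hjk hk (by omega) (by omega)]
        left; unfold sN; split_ifs <;> omega
  have hS₁' : S₁ = (fun m : ℕ => v (m : ZMod n)) '' Set.Icc 1 j := by rw [hS₁, hcomp₁]
  have hS₂' : S₂ = (fun m : ℕ => v (m : ZMod n)) '' Set.Icc (j+1) k := by rw [hS₂, hcomp₂]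
  have hS₃' : S₃ = (fun m : ℕ => v (m : ZMod n)) '' insert 0 (Set.Icc (k+1) (n-1)) := by
    rw [hS₃, hcomp₃]
  -- injectivity on small naturals
  have hinj : ∀ I : Set ℕ, (∀ m ∈ I, m < n) → Set.InjOn (fun m : ℕ => v (m : ZMod n)) I := by
    intro I hIn x hx y hy hxy
    exact (castInj (hIn x hx) (hIn y hy)).mp (hv hxy)
  have hdisj : ∀ (I I' : Set ℕ), (∀ m ∈ I, m < n) → (∀ m ∈ I', m < n) →
      (∀ m, m ∈ I → m ∈ I' → False) →
      Disjoint ((fun m : ℕ => v (m : ZMod n)) '' I) ((fun m : ℕ => v (m : ZMod n)) '' I') := by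
    intro I I' hIn hI'n hII
    rw [Set.disjoint_left]
    rintro w ⟨m, hm, rfl⟩ ⟨m', hm', he⟩
    have : m' = m := (castInj (hI'n m' hm') (hIn m hm)).mp (hv he)
    exact hII m hm (this ▸ hm')
  refine ⟨?_, ?_, ?_, ?_, ?_, ?_, ?_, ?_⟩
  · -- degrees
    intro i
    have hiv : ((i.val : ℕ) : ZMod n) = i := ZMod.natCast_rightInverse i
    rw [← hiv, nbhd i.val (ZMod.val_lt i)]
    exact Set.ncard_pair (fun h => sN_ne_tN hn hj hjk hk (ZMod.val_lt i)
      ((castInj (sN_lt hn hj hjk hk (ZMod.val_lt i)) (tN_lt hn hj hjk hk (ZMod.val_lt i))).mp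
        (hv h)))
  · rw [hS₁', Set.ncard_image_of_injOn (hinj _ (by intro m hm; simp only [Set.mem_Icc] at hm; omega)),
      ← Finset.coe_Icc, Set.ncard_coe_finset, Nat.card_Icc]
    omega
  · rw [hS₂', Set.ncard_image_of_injOn (hinj _ (by intro m hm; simp only [Set.mem_Icc] at hm; omega)),
      ← Finset.coe_Icc, Set.ncard_coe_finset, Nat.card_Icc]
    omega
  · rw [hS₃', Set.ncard_image_of_injOn (hinj _ (by
        intro m hm; simp only [Set.mem_insert_iff, Set.mem_Icc] at hm; omega)),
      Set.ncard_insert_of_notMem (by simp only [Set.mem_Icc]; omega) (Set.finite_Icc _ _),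
      ← Finset.coe_Icc, Set.ncard_coe_finset, Nat.card_Icc]
    omega
  · rw [hS₁', hS₂']
    exact hdisj _ _ (by intro m hm; simp only [Set.mem_Icc] at hm; omega)
      (by intro m hm; simp only [Set.mem_Icc] at hm; omega)
      (by intro m hm hm'; simp only [Set.mem_Icc] at hm hm'; omega)
  · rw [hS₁', hS₃']
    exact hdisj _ _ (by intro m hm; simp only [Set.mem_Icc] at hm; omega)
      (by intro m hm; simp only [Set.mem_insert_iff, Set.mem_Icc] at hm; omega)
      (by intro m hm hm'; simp only [Set.mem_Icc] at hm;
          simp only [Set.mem_insert_iff, Set.mem_Icc] at hm'; omega)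
  · rw [hS₂', hS₃']
    exact hdisj _ _ (by intro m hm; simp only [Set.mem_Icc] at hm; omega)
      (by intro m hm; simp only [Set.mem_insert_iff, Set.mem_Icc] at hm; omega)
      (by intro m hm hm'; simp only [Set.mem_Icc] at hm;
          simp only [Set.mem_insert_iff, Set.mem_Icc] at hm'; omega)
  · rw [hS₁', hS₂', hS₃']
    ext w
    simp only [Set.mem_union, Set.mem_image, Set.mem_range, Set.mem_Icc, Set.mem_insert_iff]
    constructor
    · rintro ((⟨m, -, rfl⟩ | ⟨m, -, rfl⟩) | ⟨m, -, rfl⟩) <;> exact ⟨_, rfl⟩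
    · rintro ⟨p, rfl⟩
      have hpv : ((p.val : ℕ) : ZMod n) = p := ZMod.natCast_rightInverse p
      have hpn : p.val < n := ZMod.val_lt p
      rcases (show (1 ≤ p.val ∧ p.val ≤ j) ∨ (j+1 ≤ p.val ∧ p.val ≤ k) ∨
          (p.val = 0 ∨ (k+1 ≤ p.val ∧ p.val ≤ n-1)) by omega) with h | h | h
      · exact Or.inl (Or.inl ⟨p.val, h, by rw [hpv]⟩)
      · exact Or.inl (Or.inr ⟨p.val, h, by rw [hpv]⟩)
      · exact Or.inr ⟨p.val, h, by rw [hpv]⟩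
end

section
/- Let n ≥ 4 and let X be a cycle of length n with vertex sequence v_0, v_1, …, v_{n−1} (indices modulo n). Let j be an integer with 2 ≤ j ≤ n − 2, and set a = v_0, b = v_1, c = v_j, d = v_{j+1}, so that {a,b} and {c,d} are two vertex-disjoint edges of X. Then the graph on {v_0, …, v_{n−1}} whose edge set is the symmetric difference of E(X) with the edge set {{b,a}, {a,c}, {c,d}, {d,b}} of the four-cycle (b, a, c, d) is again a single cycle of length n. -/
section Gen
variable {V : Type*} {n : ℕ} {w : ZMod n → V}

lemma zmod_ne_add_one (hn : 2 ≤ n) (i : ZMod n) : i ≠ i + 1 := by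
  haveI : NeZero n := ⟨by omega⟩
  haveI : Fact (1 < n) := ⟨by omega⟩
  intro h
  have h2 : (i + 1).val = i.val := by rw [← h]
  rw [ZMod.val_add, ZMod.val_one] at h2
  have hlt := ZMod.val_lt i
  rcases Nat.lt_or_ge (i.val + 1) n with h3 | h3
  · rw [Nat.mod_eq_of_lt h3] at h2; omega
  · have h4 : i.val + 1 = n := by omega
    rw [h4, Nat.mod_self] at h2; omega

lemma zmod_two_ne_zero (hn : 3 ≤ n) : ((2 : ℕ) : ZMod n) ≠ 0 := by
  haveI : NeZero n := ⟨by omega⟩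
  intro h
  have h2 : ((2 : ℕ) : ZMod n).val = 2 := ZMod.val_cast_of_lt (by omega)
  rw [h, ZMod.val_zero] at h2; omega

lemma zmod_sub_one_ne_add_one (hn : 3 ≤ n) (i : ZMod n) : i - 1 ≠ i + 1 := by
  intro h
  apply zmod_two_ne_zero hn
  push_cast
  linear_combination -h

lemma zmod_val_add_one (hn : 2 ≤ n) (k : ZMod n) :
    (k + 1).val = if k.val = n - 1 then 0 else k.val + 1 := by
  haveI : NeZero n := ⟨by omega⟩
  haveI : Fact (1 < n) := ⟨by omega⟩
  rw [ZMod.val_add, ZMod.val_one]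
  have hlt := ZMod.val_lt k
  split_ifs with h
  · rw [h]
    have h4 : n - 1 + 1 = n := by omega
    rw [h4, Nat.mod_self]
  · exact Nat.mod_eq_of_lt (by omega)

lemma cycle_adj_iff (hn : 3 ≤ n) (hw : Function.Injective w) (i : ZMod n) (x : V) :
    (SimpleGraph.fromEdgeSet (cycleEdges n w)).Adj (w i) x ↔ x = w (i - 1) ∨ x = w (i + 1) := by
  rw [SimpleGraph.fromEdgeSet_adj]
  constructor
  · rintro ⟨⟨k, hk⟩, hne⟩
    rw [Sym2.eq_iff] at hk
    rcases hk with ⟨h1, h2⟩ | ⟨h1, h2⟩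
    · right; rw [h2, hw h1]
    · left; rw [h2]
      congr 1
      have : i = k + 1 := hw h1
      rw [this]; ring
  · have hsub : i - 1 + 1 = i := by ring
    rintro (rfl | rfl)
    · refine ⟨⟨i - 1, ?_⟩, ?_⟩
      · rw [hsub]; exact Sym2.eq_swap
      · intro h
        exact zmod_ne_add_one (by omega) (i - 1) (by rw [hsub]; exact (hw h).symm)
    · exact ⟨⟨i, rfl⟩, fun h => zmod_ne_add_one (by omega) i (hw h)⟩

lemma cycle_nbhd_card (hn : 3 ≤ n) (hw : Function.Injective w) (i : ZMod n) :
    {x | (SimpleGraph.fromEdgeSet (cycleEdges n w)).Adj (w i) x}.ncard = 2 := by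
  have h : {x | (SimpleGraph.fromEdgeSet (cycleEdges n w)).Adj (w i) x} = {w (i - 1), w (i + 1)} := by
    ext x
    rw [Set.mem_setOf_eq, cycle_adj_iff hn hw, Set.mem_insert_iff, Set.mem_singleton_iff]
  rw [h]
  exact Set.ncard_pair (hw.ne (zmod_sub_one_ne_add_one hn i))

lemma cycle_walk_range {u x : V} (p : (SimpleGraph.fromEdgeSet (cycleEdges n w)).Walk u x)
    (hu : u ∈ Set.range w) : x ∈ Set.range w := by
  induction p with
  | nil => exact hu
  | cons h p ih =>
    apply ih
    rw [SimpleGraph.fromEdgeSet_adj] at h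
    obtain ⟨⟨k, hk⟩, -⟩ := h
    rw [Sym2.eq_iff] at hk
    rcases hk with ⟨-, rfl⟩ | ⟨-, rfl⟩ <;> exact ⟨_, rfl⟩

lemma cycle_reach0 (hn : 3 ≤ n) (hw : Function.Injective w) (m : ℕ) :
    (SimpleGraph.fromEdgeSet (cycleEdges n w)).Reachable (w 0) (w (m : ZMod n)) := by
  induction m with
  | zero => rw [Nat.cast_zero]
  | succ m ih =>
    refine ih.trans (SimpleGraph.Adj.reachable ?_)
    rw [cycle_adj_iff hn hw]
    right; push_cast; ring_nf

lemma cycle_reach_card (hn : 3 ≤ n) (hw : Function.Injective w) (i : ZMod n) :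
    {x | (SimpleGraph.fromEdgeSet (cycleEdges n w)).Reachable (w i) x}.ncard = n := by
  haveI : NeZero n := ⟨by omega⟩
  have h : {x | (SimpleGraph.fromEdgeSet (cycleEdges n w)).Reachable (w i) x} = Set.range w := by
    ext x
    constructor
    · intro hx
      exact hx.elim fun p => cycle_walk_range p ⟨i, rfl⟩
    · rintro ⟨k, rfl⟩
      have h1 := cycle_reach0 hn hw i.val
      have h2 := cycle_reach0 hn hw k.val
      rw [ZMod.natCast_rightInverse i] at h1
      rw [ZMod.natCast_rightInverse k] at h2
      exact h1.symm.trans h2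
  rw [h, ← Nat.card_coe_set_eq, Nat.card_range_of_injective hw, Nat.card_zmod]

lemma edge_inj (hn : 3 ≤ n) (hw : Function.Injective w) {i k : ZMod n}
    (h : s(w i, w (i + 1)) = s(w k, w (k + 1))) : i = k := by
  rw [Sym2.eq_iff] at h
  rcases h with ⟨h1, h2⟩ | ⟨h1, h2⟩
  · exact hw h1
  · exfalso
    apply zmod_two_ne_zero hn
    have hik := hw h1
    have hik2 := hw h2
    push_cast
    linear_combination hik2 - hik

end Gen

def switchPerm (n j : ℕ) : ZMod n → ZMod n :=
  fun k => if k.val = 0 then 0 else if k.val ≤ j then ((j + 1 - k.val : ℕ) : ZMod n) else k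

section Main
variable {V : Type*} {n j : ℕ}

lemma sp_val (hn : 4 ≤ n) (hj : 2 ≤ j) (hjn : j ≤ n - 2) (k : ZMod n) :
    (switchPerm n j k).val = if k.val = 0 then 0 else if k.val ≤ j then j + 1 - k.val else k.val := by
  haveI : NeZero n := ⟨by omega⟩
  unfold switchPerm
  split_ifs with h1 h2
  · exact ZMod.val_zero
  · exact ZMod.val_cast_of_lt (by omega)
  · rfl

lemma sp_invol (hn : 4 ≤ n) (hj : 2 ≤ j) (hjn : j ≤ n - 2) (k : ZMod n) :
    switchPerm n j (switchPerm n j k) = k := by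
  haveI : NeZero n := ⟨by omega⟩
  apply ZMod.val_injective n
  rw [sp_val hn hj hjn, sp_val hn hj hjn]
  have hlt := ZMod.val_lt k
  split_ifs <;> omega

-- C1 : behaviour at k with k.val = 0
lemma sp_C1 (hn : 4 ≤ n) (hj : 2 ≤ j) (hjn : j ≤ n - 2) {k : ZMod n} (h0 : k.val = 0) :
    switchPerm n j k = 0 ∧ switchPerm n j (k + 1) = ((j : ℕ) : ZMod n) := by
  haveI : NeZero n := ⟨by omega⟩
  have hk1 : (k + 1).val = 1 := by rw [zmod_val_add_one (by omega) k]; simp [h0]; omega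
  constructor
  · apply ZMod.val_injective n
    rw [sp_val hn hj hjn, if_pos h0, ZMod.val_zero]
  · apply ZMod.val_injective n
    rw [sp_val hn hj hjn, hk1, if_neg (by omega), if_pos (by omega),
      ZMod.val_cast_of_lt (show j < n by omega)]
    omega

lemma sp_C2 (hn : 4 ≤ n) (hj : 2 ≤ j) (hjn : j ≤ n - 2) {k : ZMod n}
    (h1 : 1 ≤ k.val) (h2 : k.val ≤ j - 1) :
    switchPerm n j k = ((j - k.val : ℕ) : ZMod n) + 1 ∧
    switchPerm n j (k + 1) = ((j - k.val : ℕ) : ZMod n) := by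
  haveI : NeZero n := ⟨by omega⟩
  have hq : ((j - k.val : ℕ) : ZMod n).val = j - k.val := ZMod.val_cast_of_lt (by omega)
  have hq1 : (((j - k.val : ℕ) : ZMod n) + 1).val = j - k.val + 1 := by
    rw [zmod_val_add_one (by omega), hq, if_neg (by omega)]
  have hk1 : (k + 1).val = k.val + 1 := by
    rw [zmod_val_add_one (by omega), if_neg (by omega)]
  constructor
  · apply ZMod.val_injective n
    rw [sp_val hn hj hjn, if_neg (by omega), if_pos (by omega), hq1]
    omega
  · apply ZMod.val_injective n
    rw [sp_val hn hj hjn, hk1, if_neg (by omega), if_pos (by omega), hq]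
    omega

lemma sp_C3 (hn : 4 ≤ n) (hj : 2 ≤ j) (hjn : j ≤ n - 2) {k : ZMod n} (h0 : k.val = j) :
    switchPerm n j k = 1 ∧ switchPerm n j (k + 1) = k + 1 := by
  haveI : NeZero n := ⟨by omega⟩
  haveI : Fact (1 < n) := ⟨by omega⟩
  have hk1 : (k + 1).val = j + 1 := by
    rw [zmod_val_add_one (by omega), if_neg (by omega), h0]
  constructor
  · apply ZMod.val_injective n
    rw [sp_val hn hj hjn, if_neg (by omega), if_pos (by omega), ZMod.val_one]
    omega
  · apply ZMod.val_injective n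
    rw [sp_val hn hj hjn, hk1, if_neg (by omega), if_neg (by omega)]

lemma sp_C4 (hn : 4 ≤ n) (hj : 2 ≤ j) (hjn : j ≤ n - 2) {k : ZMod n} (h0 : j + 1 ≤ k.val) :
    switchPerm n j k = k ∧ switchPerm n j (k + 1) = k + 1 := by
  haveI : NeZero n := ⟨by omega⟩
  have hk1 := zmod_val_add_one (show 2 ≤ n by omega) k
  constructor
  · apply ZMod.val_injective n
    rw [sp_val hn hj hjn, if_neg (by omega), if_neg (by omega)]
  · have hk1' : (k + 1).val = 0 ∨ (k + 1).val = k.val + 1 := by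
      rw [hk1]; split_ifs <;> simp
    apply ZMod.val_injective n
    rcases hk1' with h | h
    · rw [sp_val hn hj hjn, h, if_pos rfl]
    · rw [sp_val hn hj hjn, h, if_neg (by omega), if_neg (by omega)]

lemma e2_notMem (hn : 4 ≤ n) (hj : 2 ≤ j) (hjn : j ≤ n - 2) {v : ZMod n → V}
    (hv : Function.Injective v) : s(v 0, v ((j : ℕ) : ZMod n)) ∉ cycleEdges n v := by
  haveI : NeZero n := ⟨by omega⟩
  haveI : Fact (1 < n) := ⟨by omega⟩
  have hjv : ((j : ℕ) : ZMod n).val = j := ZMod.val_cast_of_lt (by omega)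
  rintro ⟨i, hi⟩
  rw [Sym2.eq_iff] at hi
  rcases hi with ⟨h1, h2⟩ | ⟨h1, h2⟩
  · have hi0 : (0 : ZMod n) = i := hv h1
    have hj1 : ((j : ℕ) : ZMod n) = 1 := by rw [hv h2, ← hi0, zero_add]
    have := congrArg ZMod.val hj1
    rw [hjv, ZMod.val_one] at this
    omega
  · have hij : ((j : ℕ) : ZMod n) = i := hv h2
    have h01 : (0 : ZMod n) = ((j : ℕ) : ZMod n) + 1 := by rw [hv h1, hij]
    have := congrArg ZMod.val h01
    rw [ZMod.val_zero, zmod_val_add_one (by omega), hjv, if_neg (by omega)] at this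
    omega

lemma e4_notMem (hn : 4 ≤ n) (hj : 2 ≤ j) (hjn : j ≤ n - 2) {v : ZMod n → V}
    (hv : Function.Injective v) :
    s(v (((j : ℕ) : ZMod n) + 1), v 1) ∉ cycleEdges n v := by
  haveI : NeZero n := ⟨by omega⟩
  haveI : Fact (1 < n) := ⟨by omega⟩
  have hjv : ((j : ℕ) : ZMod n).val = j := ZMod.val_cast_of_lt (by omega)
  have hjv1 : (((j : ℕ) : ZMod n) + 1).val = j + 1 := by
    rw [zmod_val_add_one (by omega), hjv, if_neg (by omega)]
  rintro ⟨i, hi⟩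
  rw [Sym2.eq_iff] at hi
  rcases hi with ⟨h1, h2⟩ | ⟨h1, h2⟩
  · have hz : ((j : ℕ) : ZMod n) + 1 = 0 := by linear_combination (hv h1) - (hv h2)
    have := congrArg ZMod.val hz
    rw [hjv1, ZMod.val_zero] at this
    omega
  · have hz : ((j : ℕ) : ZMod n) = 1 := by linear_combination (hv h1) - (hv h2)
    have := congrArg ZMod.val hz
    rw [hjv, ZMod.val_one] at this
    omega

end Main

def switchSeq {V : Type*} (n j : ℕ) (v : ZMod n → V) : ZMod n → V :=
  fun k => v (switchPerm n j k)

theorem four_cycle_switch_single_cycle {V : Type*} (n : ℕ) (hn : 4 ≤ n)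
    (v : ZMod n → V) (hv : Function.Injective v)
    (j : ℕ) (hj : 2 ≤ j) (hjn : j ≤ n - 2)
    (a b c d : V)
    (ha : a = v 0) (hb : b = v 1) (hc : c = v (j : ZMod n))
    (hd : d = v ((j + 1 : ℕ) : ZMod n))
    (E' : Set (Sym2 V))
    (hE' : E' = symmDiff (cycleEdges n v) {s(b, a), s(a, c), s(c, d), s(d, b)}) :
    (∀ i : ZMod n, {w | (SimpleGraph.fromEdgeSet E').Adj (v i) w}.ncard = 2) ∧
    (∀ i : ZMod n, {w | (SimpleGraph.fromEdgeSet E').Reachable (v i) w}.ncard = n) := by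
  haveI : NeZero n := ⟨by omega⟩
  haveI : Fact (1 < n) := ⟨by omega⟩
  have hfi : Function.Injective (switchPerm n j) :=
    Function.Involutive.injective (sp_invol hn hj hjn)
  have hw : Function.Injective (switchSeq n j v) := fun x y h => hfi (hv h)
  have hjv : ((j : ℕ) : ZMod n).val = j := ZMod.val_cast_of_lt (by omega)
  have hjv1 : (((j : ℕ) : ZMod n) + 1).val = j + 1 := by
    rw [zmod_val_add_one (by omega), hjv, if_neg (by omega)]
  have hcast : ((j + 1 : ℕ) : ZMod n) = ((j : ℕ) : ZMod n) + 1 := by push_cast; ring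
  have h1A : s(v 0, v 1) ∈ cycleEdges n v := ⟨0, by rw [zero_add]⟩
  have h3A : s(v ((j : ℕ) : ZMod n), v (((j : ℕ) : ZMod n) + 1)) ∈ cycleEdges n v :=
    ⟨((j : ℕ) : ZMod n), rfl⟩
  have h2A := e2_notMem hn hj hjn hv
  have h4A := e4_notMem hn hj hjn hv
  have hEe : ∀ e : Sym2 V, e ∈ E' ↔
      ((e ∈ cycleEdges n v ∧ e ≠ s(v 0, v 1) ∧
          e ≠ s(v ((j : ℕ) : ZMod n), v (((j : ℕ) : ZMod n) + 1))) ∨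
        (e = s(v 0, v ((j : ℕ) : ZMod n)) ∨ e = s(v (((j : ℕ) : ZMod n) + 1), v 1))) := by
    intro e
    rw [hE', Set.mem_symmDiff]
    have hb' : s(b, a) = s(v 0, v 1) := by rw [ha, hb]; exact Sym2.eq_swap
    have hac : s(a, c) = s(v 0, v ((j : ℕ) : ZMod n)) := by rw [ha, hc]
    have hcd : s(c, d) = s(v ((j : ℕ) : ZMod n), v (((j : ℕ) : ZMod n) + 1)) := by
      rw [hc, hd, hcast]
    have hdb : s(d, b) = s(v (((j : ℕ) : ZMod n) + 1), v 1) := by rw [hd, hb, hcast]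
    rw [hb', hac, hcd, hdb]
    simp only [Set.mem_insert_iff, Set.mem_singleton_iff]
    constructor
    · rintro (⟨hA, hF⟩ | ⟨hF, hA⟩)
      · exact Or.inl ⟨hA, fun h => hF (Or.inl h), fun h => hF (Or.inr (Or.inr (Or.inl h)))⟩
      · rcases hF with rfl | rfl | rfl | rfl
        · exact absurd h1A hA
        · exact Or.inr (Or.inl rfl)
        · exact absurd h3A hA
        · exact Or.inr (Or.inr rfl)
    · rintro (⟨hA, hne1, hne3⟩ | rfl | rfl)
      · left
        refine ⟨hA, ?_⟩
        rintro (rfl | rfl | rfl | rfl)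
        · exact hne1 rfl
        · exact h2A hA
        · exact hne3 rfl
        · exact h4A hA
      · exact Or.inr ⟨Or.inr (Or.inl rfl), h2A⟩
      · exact Or.inr ⟨Or.inr (Or.inr (Or.inr rfl)), h4A⟩
  have hEw : cycleEdges n (switchSeq n j v) = E' := by
    ext e
    rw [hEe e]
    constructor
    · rintro ⟨k, rfl⟩
      simp only [switchSeq]
      have hlt := ZMod.val_lt k
      rcases Nat.lt_or_ge k.val (j + 1) with hk | hk
      · rcases Nat.eq_zero_or_pos k.val with h0 | h1
        · obtain ⟨ha1, ha2⟩ := sp_C1 hn hj hjn h0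
          rw [ha1, ha2]
          exact Or.inr (Or.inl rfl)
        · rcases Nat.lt_or_ge k.val j with hkj | hkj
          · set q : ZMod n := ((j - k.val : ℕ) : ZMod n) with hqdef
            have hqv : q.val = j - k.val := ZMod.val_cast_of_lt (by omega)
            obtain ⟨ha1, ha2⟩ := sp_C2 hn hj hjn h1 (by omega)
            rw [ha1, ha2]
            left
            refine ⟨⟨q, Sym2.eq_swap⟩, ?_, ?_⟩
            · intro h
              have h' : s(v q, v (q + 1)) = s(v 0, v (0 + 1)) := by
                rw [zero_add]; exact Sym2.eq_swap.trans h
              have hq0 := edge_inj (show 3 ≤ n by omega) hv h'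
              have := congrArg ZMod.val hq0
              rw [hqv, ZMod.val_zero] at this; omega
            · intro h
              have h' : s(v q, v (q + 1)) =
                  s(v ((j : ℕ) : ZMod n), v (((j : ℕ) : ZMod n) + 1)) := Sym2.eq_swap.trans h
              have hqj := edge_inj (show 3 ≤ n by omega) hv h'
              have := congrArg ZMod.val hqj
              rw [hqv, hjv] at this; omega
          · obtain ⟨ha1, ha2⟩ := sp_C3 hn hj hjn (show k.val = j by omega)
            rw [ha1, ha2]
            right; right
            have hkj' : k = ((j : ℕ) : ZMod n) := ZMod.val_injective n (by rw [hjv]; omega)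
            rw [hkj']
            exact Sym2.eq_swap
      · obtain ⟨ha1, ha2⟩ := sp_C4 hn hj hjn hk
        rw [ha1, ha2]
        left
        refine ⟨⟨k, rfl⟩, ?_, ?_⟩
        · intro h
          have h' : s(v k, v (k + 1)) = s(v 0, v (0 + 1)) := by rw [zero_add]; exact h
          have hk0 := edge_inj (show 3 ≤ n by omega) hv h'
          have := congrArg ZMod.val hk0
          rw [ZMod.val_zero] at this; omega
        · intro h
          have hkj := edge_inj (show 3 ≤ n by omega) hv h
          have := congrArg ZMod.val hkj
          rw [hjv] at this; omega
    · rintro (⟨⟨i, rfl⟩, hne1, hne3⟩ | rfl | rfl)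
      · have hlt := ZMod.val_lt i
        have hi0 : i.val ≠ 0 := by
          intro h
          apply hne1
          have hz : i = 0 := ZMod.val_injective n (by rw [h, ZMod.val_zero])
          rw [hz, zero_add]
        have hij : i.val ≠ j := by
          intro h
          apply hne3
          have hz : i = ((j : ℕ) : ZMod n) := ZMod.val_injective n (by rw [h, hjv])
          rw [hz]
        rcases Nat.lt_or_ge i.val j with hkj | hkj
        · refine ⟨((j - i.val : ℕ) : ZMod n), ?_⟩
          have hqv : ((j - i.val : ℕ) : ZMod n).val = j - i.val := ZMod.val_cast_of_lt (by omega)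
          obtain ⟨ha1, ha2⟩ := sp_C2 hn hj hjn (k := ((j - i.val : ℕ) : ZMod n))
            (by rw [hqv]; omega) (by rw [hqv]; omega)
          simp only [switchSeq]
          rw [ha1, ha2]
          have hjj : ((j - ((j - i.val : ℕ) : ZMod n).val : ℕ) : ZMod n) = i := by
            rw [hqv]
            have hz : j - (j - i.val) = i.val := by omega
            rw [hz]
            exact ZMod.natCast_rightInverse i
          rw [hjj]
          exact Sym2.eq_swap
        · refine ⟨i, ?_⟩
          obtain ⟨ha1, ha2⟩ := sp_C4 hn hj hjn (show j + 1 ≤ i.val by omega)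
          simp only [switchSeq]
          rw [ha1, ha2]
      · refine ⟨0, ?_⟩
        obtain ⟨ha1, ha2⟩ := sp_C1 hn hj hjn (k := 0) ZMod.val_zero
        simp only [switchSeq]
        rw [ha1, ha2]
      · refine ⟨((j : ℕ) : ZMod n), ?_⟩
        obtain ⟨ha1, ha2⟩ := sp_C3 hn hj hjn (k := ((j : ℕ) : ZMod n)) hjv
        simp only [switchSeq]
        rw [ha1, ha2]
        exact Sym2.eq_swap
  have hvw : ∀ i : ZMod n, v i = switchSeq n j v (switchPerm n j i) := fun i => by
    simp only [switchSeq]; rw [sp_invol hn hj hjn]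
  refine ⟨fun i => ?_, fun i => ?_⟩
  · rw [hvw i, ← hEw]
    exact cycle_nbhd_card (by omega) hw _
  · rw [hvw i, ← hEw]
    exact cycle_reach_card (by omega) hw _
end
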